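/- arXiv:2510.23871 — 11 statements merged into one kernel-verified Lean document; each statement's English description precedes it below -/
import Mathlib

section
/- Let G be a group, I and Λ index sets, and P a regular Λ×I matrix with entries in G⁰ that contains at least one zero entry. Then the center of the 0-Rees matrix semigroup M⁰[G;I,Λ;P] is exactly {0}, and M⁰[G;I,Λ;P] is not commutative. -/
variable {G : Type*} [Group G] {I Λ : Type*}

/-- Multiplication in the 0-Rees matrix semigroup `M⁰[G;I,Λ;P]` on `(I×G×Λ) ∪ {0}`.
The zero element is `none`, and a zero entry of `P` is encoded as `none`. -/
def reesMul (P : Λ → I → Option G) :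
    Option (I × G × Λ) → Option (I × G × Λ) → Option (I × G × Λ)
  | some (i, x, l), some (j, y, m) => (P l j).map fun p => (i, x * p * y, m)
  | _, _ => none

/-
If `(i, x, λ)` is central, then `(i, x, λ)(j, 1, λ) = 0` iff `(j, 1, λ)(i, x, λ) = 0`, i.e.
`p_{λ j} = 0` iff `p_{λ i} = 0`, for every `j`: row `λ` of `P` is either entirely zero or has no zero
entry, and regularity excludes the former. Hence `(i, x, λ)(i₀, 1, λ₀)` is non-zero, and so is the
reversed product; their last coordinates are `λ₀` and `λ`, so `λ = λ₀`, contradicting `p_{λ₀ i₀} = 0`.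
-/
section

variable (P : Λ → I → Option G)

@[simp]
theorem reesMul_none_left (t : Option (I × G × Λ)) : reesMul P none t = none := rfl

@[simp]
theorem reesMul_none_right (s : Option (I × G × Λ)) : reesMul P s none = none := by
  rcases s with _ | ⟨i, x, l⟩ <;> rfl

theorem reesMul_some_eq_none_iff (i : I) (x : G) (l : Λ) (j : I) (y : G) (m : Λ) :
    reesMul P (some (i, x, l)) (some (j, y, m)) = none ↔ P l j = none :=
  Option.map_eq_none_iff

theorem eq_of_reesMul_comm_of_ne_none {i : I} {x : G} {l : Λ} {j : I} {y : G} {m : Λ}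
    (hcomm : reesMul P (some (i, x, l)) (some (j, y, m)) =
      reesMul P (some (j, y, m)) (some (i, x, l)))
    (hlj : P l j ≠ none) : l = m := by
  obtain ⟨p, hp⟩ := Option.ne_none_iff_exists'.mp hlj
  cases hq : P m i with
  | none => simp [reesMul, hp, hq] at hcomm
  | some q =>
    simp only [reesMul, hp, hq, Option.map_some, Option.some.injEq, Prod.mk.injEq] at hcomm
    exact hcomm.2.2.symm

variable {P}

theorem row_eq_none_iff_of_reesMul_central {i : I} {x : G} {l : Λ}
    (hs : ∀ t, reesMul P (some (i, x, l)) t = reesMul P t (some (i, x, l))) (j j' : I) :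
    P l j = none ↔ P l j' = none := by
  have hrow_col (k : I) : P l k = none ↔ P l i = none := by
    rw [← reesMul_some_eq_none_iff P i x l k 1 l, hs, reesMul_some_eq_none_iff]
  exact (hrow_col j).trans (hrow_col j').symm

theorem eq_none_of_reesMul_central (hrow : ∀ l : Λ, ∃ i : I, P l i ≠ none)
    {i₀ : I} {l₀ : Λ} (h₀ : P l₀ i₀ = none) {s : Option (I × G × Λ)}
    (hs : ∀ t, reesMul P s t = reesMul P t s) : s = none := by
  rcases s with _ | ⟨i, x, l⟩
  · rfl
  obtain ⟨j, hj⟩ := hrow l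
  have hli₀ : P l i₀ ≠ none := fun h => hj ((row_eq_none_iff_of_reesMul_central hs j i₀).mpr h)
  have hl : l = l₀ := eq_of_reesMul_comm_of_ne_none P (y := 1) (hs _) hli₀
  exact absurd h₀ (hl ▸ hli₀)

end

theorem stmt_2_general (P : Λ → I → Option G)
    (hrow : ∀ l : Λ, ∃ i : I, P l i ≠ none)
    (hzero : ∃ (i : I) (l : Λ), P l i = none) :
    {s : Option (I × G × Λ) | ∀ t : Option (I × G × Λ), reesMul P s t = reesMul P t s} =
      {(none : Option (I × G × Λ))} ∧
    ¬ (∀ s t : Option (I × G × Λ), reesMul P s t = reesMul P t s) := by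
  obtain ⟨i₀, l₀, h₀⟩ := hzero
  refine ⟨Set.eq_singleton_iff_unique_mem.mpr ⟨fun t => ?_, fun s hs => ?_⟩, fun hcomm => ?_⟩
  · simp
  · exact eq_none_of_reesMul_central hrow h₀ hs
  · exact Option.some_ne_none (i₀, 1, l₀) (eq_none_of_reesMul_central hrow h₀ (hcomm _))

/-- If `P` is regular and contains at least one zero entry, then the center of
`M⁰[G;I,Λ;P]` is exactly `{0}`, and `M⁰[G;I,Λ;P]` is not commutative. -/
theorem stmt_2 (P : Λ → I → Option G)
    (hrow : ∀ l : Λ, ∃ i : I, P l i ≠ none)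
    (hcol : ∀ i : I, ∃ l : Λ, P l i ≠ none)
    (hzero : ∃ (i : I) (l : Λ), P l i = none) :
    {s : Option (I × G × Λ) | ∀ t : Option (I × G × Λ), reesMul P s t = reesMul P t s} =
      {(none : Option (I × G × Λ))} ∧
    ¬ (∀ s t : Option (I × G × Λ), reesMul P s t = reesMul P t s) :=
  stmt_2_general P hrow hzero
end

section
/- Let G be a finite group, I and Λ finite index sets, and let P and Q be regular Λ×I matrices with entries in G⁰, each containing at least one zero entry. If P and Q have the same zero pattern, i.e. for all i ∈ I and λ ∈ Λ, p_{λi} = 0 if and only if q_{λi} = 0, then the commuting graphs C(M⁰[G;I,Λ;P]) and C(M⁰[G;I,Λ;Q]) are isomorphic as simple graphs (there is a bijection between their vertex sets under which two vertices are adjacent in one graph if and only if their images are adjacent in the other). -/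
/-!
Two nonzero elements `(i,x,λ)` and `(j,y,μ)` of `M⁰[G;I,Λ;P]` commute exactly when either both
products vanish (`p_{λj} = p_{μi} = 0`, a condition on the zero pattern only), or they lie in the
same nonzero cell `i = j`, `λ = μ` with `p = p_{λi}` and `xp` commuting with `yp`. Rescaling every
element of a cell where `p_{λi}, q_{λi} ≠ 0` by `x ↦ x p_{λi} q_{λi}⁻¹` turns `xp` into
`x' q_{λi}`, so it carries the commuting relation for `P` onto the one for `Q`.
-/

variable {G : Type*} [Group G] {I Λ : Type*}

/-- The commuting graph of `M⁰[G;I,Λ;P]`. Its vertex set is `I×G×Λ`, the set of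
non-central elements (the center is `{0}`). -/
def commGraph (P : Λ → I → Option G) : SimpleGraph (I × G × Λ) where
  Adj a b := a ≠ b ∧ reesMul P (some a) (some b) = reesMul P (some b) (some a)
  symm := ⟨fun _ _ h => ⟨h.1.symm, h.2.symm⟩⟩
  loopless := ⟨fun _ h => h.1 rfl⟩

variable {P Q : Λ → I → Option G}

theorem commute_mul_right_iff {x y p : G} : Commute (x * p) (y * p) ↔ x * p * y = y * p * x := by
  rw [Commute, SemiconjBy, ← mul_assoc, ← mul_assoc, mul_left_inj]

theorem reesMul_some_comm_iff {i j : I} {x y : G} {l m : Λ} :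
    reesMul P (some (i, x, l)) (some (j, y, m)) = reesMul P (some (j, y, m)) (some (i, x, l)) ↔
      P l j = none ∧ P m i = none ∨ i = j ∧ l = m ∧ ∃ p ∈ P l i, Commute (x * p) (y * p) := by
  by_cases hcell : i = j ∧ l = m
  · obtain ⟨rfl, rfl⟩ := hcell
    rcases hp : P l i with _ | p <;> simp [reesMul, hp, commute_mul_right_iff]
  · rw [or_iff_left fun h => hcell ⟨h.1, h.2.1⟩]
    rcases hlj : P l j with _ | p <;> rcases hmi : P m i with _ | p' <;> simp [reesMul, hlj, hmi]
    exact fun hij _ hml => hcell ⟨hij, hml.symm⟩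

def twist (P Q : Λ → I → Option G) (i : I) (l : Λ) : G :=
  match P l i, Q l i with
  | some p, some q => p * q⁻¹
  | _, _ => 1

theorem exists_commute_twist_iff {i : I} {l : Λ} (hcell : P l i = none ↔ Q l i = none) (x y : G) :
    (∃ q ∈ Q l i, Commute (x * twist P Q i l * q) (y * twist P Q i l * q)) ↔
      ∃ p ∈ P l i, Commute (x * p) (y * p) := by
  unfold twist
  cases hp : P l i <;> cases hq : Q l i <;> simp_all [mul_assoc]

def twistEquiv (P Q : Λ → I → Option G) : I × G × Λ ≃ I × G × Λ where
  toFun a := (a.1, a.2.1 * twist P Q a.1 a.2.2, a.2.2)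
  invFun a := (a.1, a.2.1 * (twist P Q a.1 a.2.2)⁻¹, a.2.2)
  left_inv a := by simp
  right_inv a := by simp

def commGraphIsoOfZeroPattern (hpattern : ∀ (i : I) (l : Λ), P l i = none ↔ Q l i = none) :
    commGraph P ≃g commGraph Q where
  toEquiv := twistEquiv P Q
  map_rel_iff' := by
    rintro ⟨i, x, l⟩ ⟨j, y, m⟩
    refine and_congr (twistEquiv P Q).injective.ne_iff ?_
    simp only [twistEquiv, Equiv.coe_fn_mk]
    rw [reesMul_some_comm_iff, reesMul_some_comm_iff, ← hpattern, ← hpattern]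
    refine or_congr_right (and_congr_right fun hij => and_congr_right fun hlm => ?_)
    subst hij hlm
    exact exists_commute_twist_iff (hpattern i l) x y

theorem stmt_3_general (P Q : Λ → I → Option G)
    (hpattern : ∀ (i : I) (l : Λ), P l i = none ↔ Q l i = none) :
    Nonempty (commGraph P ≃g commGraph Q) :=
  ⟨commGraphIsoOfZeroPattern hpattern⟩

/-- If the regular matrices `P` and `Q` (each with at least one zero entry) have the same
zero pattern, then the commuting graphs `C(M⁰[G;I,Λ;P])` and `C(M⁰[G;I,Λ;Q])` are
isomorphic as simple graphs. -/
theorem stmt_3 [Fintype G] [Fintype I] [Fintype Λ] (P Q : Λ → I → Option G)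
    (hProw : ∀ l : Λ, ∃ i : I, P l i ≠ none)
    (hPcol : ∀ i : I, ∃ l : Λ, P l i ≠ none)
    (hQrow : ∀ l : Λ, ∃ i : I, Q l i ≠ none)
    (hQcol : ∀ i : I, ∃ l : Λ, Q l i ≠ none)
    (hPzero : ∃ (i : I) (l : Λ), P l i = none)
    (hQzero : ∃ (i : I) (l : Λ), Q l i = none)
    (hpattern : ∀ (i : I) (l : Λ), P l i = none ↔ Q l i = none) :
    Nonempty (commGraph P ≃g commGraph Q) :=
  stmt_3_general P Q hpattern
end

section
/- Let G be a finite group, I and Λ finite index sets, and P a regular Λ×I matrix with entries in G⁰ containing at least one zero entry. For every i ∈ I and λ ∈ Λ, the subgraph of C(M⁰[G;I,Λ;P]) induced by {i}×G×{λ} is isomorphic to the complete graph K_{|G|} if G is abelian or p_{λi} = 0, and is isomorphic to the graph join K_{|Z(G)|} ⋈ C(G) if G is non-abelian and p_{λi} ≠ 0 (here C(G) is the commuting graph of the group G). -/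
variable {G : Type*} [Group G] {I Λ : Type*}

/-- The commuting graph of the group `G`: its vertices are the non-central elements of `G`,
and distinct vertices are adjacent iff they commute. -/
def groupCommGraph (G : Type*) [Group G] : SimpleGraph {g : G // g ∉ Subgroup.center G} where
  Adj a b := a ≠ b ∧ (a : G) * (b : G) = (b : G) * (a : G)
  symm := ⟨fun _ _ h => ⟨h.1.symm, h.2.symm⟩⟩
  loopless := ⟨fun _ h => h.1 rfl⟩

/-- The graph join `G₁ ⋈ G₂` of two simple graphs: the vertex set is the disjoint union,
edges are those of `G₁`, those of `G₂`, and all pairs with one vertex in each part. -/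
def graphJoin {α β : Type*} (G₁ : SimpleGraph α) (G₂ : SimpleGraph β) :
    SimpleGraph (α ⊕ β) where
  Adj a b :=
    match a, b with
    | Sum.inl x, Sum.inl y => G₁.Adj x y
    | Sum.inr x, Sum.inr y => G₂.Adj x y
    | Sum.inl _, Sum.inr _ => True
    | Sum.inr _, Sum.inl _ => True
  symm := by
    refine ⟨?_⟩
    rintro (x | x) (y | y) h
    · exact G₁.adj_symm h
    · trivial
    · trivial
    · exact G₂.adj_symm h
  loopless := by
    refine ⟨?_⟩
    rintro (x | x) h
    · exact G₁.loopless.irrefl x h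
    · exact G₂.loopless.irrefl x h


/-!
On `{i}×G×{λ}` the product is `(i,x,λ)(i,y,λ) = (i, x p y, λ)` when `p = p_{λi} ≠ 0` and `0`
otherwise. In the second case every two elements commute. In the first, left translation by
`p` identifies the fibre with `G`, since `x p y = y p x ↔ (p x)(p y) = (p y)(p x)`; and the
commuting graph on all of `G` is complete for abelian `G` and in general the join of the
complete graph on the centre with `C(G)`.
-/

/-- The graph on all of `G` joining distinct commuting elements; its restriction to the
non-central elements is `groupCommGraph G`. -/
def commuteGraph (G : Type*) [Group G] : SimpleGraph G where
  Adj a b := a ≠ b ∧ Commute a b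
  symm := ⟨fun _ _ h => ⟨h.1.symm, h.2.symm⟩⟩
  loopless := ⟨fun _ h => h.1 rfl⟩

theorem commuteGraph_eq_top (h : ∀ a b : G, a * b = b * a) : commuteGraph G = ⊤ := by
  ext a b
  exact and_iff_left (h a b)

open Classical in
/-- Central elements commute with everything, so they form the complete part of the join. -/
noncomputable def graphJoinIsoCommuteGraph :
    graphJoin (⊤ : SimpleGraph (Subgroup.center G)) (groupCommGraph G) ≃g commuteGraph G where
  toEquiv := Equiv.sumCompl (· ∈ Subgroup.center G)
  map_rel_iff' := by
    rintro (⟨u, hu⟩ | ⟨u, hu⟩) (⟨v, hv⟩ | ⟨v, hv⟩) <;>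
      simp only [Equiv.sumCompl_apply_inl, Equiv.sumCompl_apply_inr]
    · exact ⟨fun h he => h.1 (congrArg Subtype.val he),
        fun h => ⟨fun he => h (Subtype.ext he), Subgroup.mem_center_iff.mp hv u⟩⟩
    · exact iff_of_true ⟨fun he => hv (he ▸ hu), (Subgroup.mem_center_iff.mp hu v).symm⟩ trivial
    · exact iff_of_true ⟨fun he => hu (he ▸ hv), Subgroup.mem_center_iff.mp hv u⟩ trivial
    · exact ⟨fun h => ⟨fun he => h.1 (congrArg Subtype.val he), h.2⟩,
        fun h => ⟨fun he => h.1 (Subtype.ext he), h.2⟩⟩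

theorem mul_mul_eq_mul_mul_iff_commute (p x y : G) :
    x * p * y = y * p * x ↔ Commute (p * x) (p * y) := by
  simp only [Commute, SemiconjBy, mul_assoc, mul_right_inj]

def fiberEquiv (i : I) (l : Λ) :
    {v : I × G × Λ // v ∈ {v : I × G × Λ | v.1 = i ∧ v.2.2 = l}} ≃ G where
  toFun v := v.1.2.1
  invFun x := ⟨(i, x, l), rfl, rfl⟩
  left_inv := by
    rintro ⟨⟨_, _, _⟩, rfl, rfl⟩
    rfl
  right_inv _ := rfl

section Fiber

variable {P : Λ → I → Option G} {i : I} {l : Λ}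

theorem commGraph_adj_of_eq_none (hP : P l i = none) (x y : G) :
    (commGraph P).Adj (i, x, l) (i, y, l) ↔ x ≠ y := by
  simp [commGraph, reesMul, hP]

theorem commGraph_adj_of_eq_some {p : G} (hP : P l i = some p) (x y : G) :
    (commGraph P).Adj (i, x, l) (i, y, l) ↔ x ≠ y ∧ x * p * y = y * p * x := by
  simp [commGraph, reesMul, hP]

variable (P i l) in
abbrev fiberGraph : SimpleGraph {v : I × G × Λ // v ∈ {v : I × G × Λ | v.1 = i ∧ v.2.2 = l}} :=
  (commGraph P).induce {v : I × G × Λ | v.1 = i ∧ v.2.2 = l}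

def fiberGraphIsoTop (hP : P l i = none) : fiberGraph P i l ≃g (⊤ : SimpleGraph G) where
  toEquiv := fiberEquiv i l
  map_rel_iff' := by
    rintro ⟨⟨_, x, _⟩, rfl, rfl⟩ ⟨⟨_, y, _⟩, hi, hl⟩
    obtain ⟨⟩ := hi
    obtain ⟨⟩ := hl
    exact (commGraph_adj_of_eq_none hP x y).symm

def fiberGraphIsoCommuteGraph {p : G} (hP : P l i = some p) :
    fiberGraph P i l ≃g commuteGraph G where
  toEquiv := (fiberEquiv i l).trans (Equiv.mulLeft p)
  map_rel_iff' := by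
    rintro ⟨⟨_, x, _⟩, rfl, rfl⟩ ⟨⟨_, y, _⟩, hi, hl⟩
    obtain ⟨⟩ := hi
    obtain ⟨⟩ := hl
    rw [SimpleGraph.induce_adj, commGraph_adj_of_eq_some hP, mul_mul_eq_mul_mul_iff_commute]
    simp [commuteGraph, fiberEquiv]

end Fiber

theorem stmt_4_general (P : Λ → I → Option G)
    (i : I) (l : Λ) :
    ((∀ a b : G, a * b = b * a) ∨ P l i = none →
      Nonempty (((commGraph P).induce {v : I × G × Λ | v.1 = i ∧ v.2.2 = l}) ≃g
        (⊤ : SimpleGraph G))) ∧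
    (¬ (∀ a b : G, a * b = b * a) ∧ P l i ≠ none →
      Nonempty (((commGraph P).induce {v : I × G × Λ | v.1 = i ∧ v.2.2 = l}) ≃g
        graphJoin (⊤ : SimpleGraph (Subgroup.center G)) (groupCommGraph G))) := by
  constructor
  · rintro (hcomm | hnone)
    · cases hP : P l i with
      | none => exact ⟨fiberGraphIsoTop hP⟩
      | some p =>
        rw [← commuteGraph_eq_top hcomm]
        exact ⟨fiberGraphIsoCommuteGraph hP⟩
    · exact ⟨fiberGraphIsoTop hnone⟩
  · rintro ⟨-, hp⟩
    obtain ⟨p, hP⟩ := Option.ne_none_iff_exists'.mp hp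
    exact ⟨(fiberGraphIsoCommuteGraph hP).trans graphJoinIsoCommuteGraph.symm⟩

/-- The subgraph of `C(M⁰[G;I,Λ;P])` induced by `{i}×G×{λ}` is isomorphic to the complete
graph `K_{|G|}` (here: the complete graph on `G`) if `G` is abelian or `p_{λi} = 0`, and to
the graph join `K_{|Z(G)|} ⋈ C(G)` if `G` is non-abelian and `p_{λi} ≠ 0`. -/
theorem stmt_4 [Fintype G] [Fintype I] [Fintype Λ] (P : Λ → I → Option G)
    (hrow : ∀ l : Λ, ∃ i : I, P l i ≠ none)
    (hcol : ∀ i : I, ∃ l : Λ, P l i ≠ none)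
    (hzero : ∃ (i : I) (l : Λ), P l i = none)
    (i : I) (l : Λ) :
    ((∀ a b : G, a * b = b * a) ∨ P l i = none →
      Nonempty (((commGraph P).induce {v : I × G × Λ | v.1 = i ∧ v.2.2 = l}) ≃g
        (⊤ : SimpleGraph G))) ∧
    (¬ (∀ a b : G, a * b = b * a) ∧ P l i ≠ none →
      Nonempty (((commGraph P).induce {v : I × G × Λ | v.1 = i ∧ v.2.2 = l}) ≃g
        graphJoin (⊤ : SimpleGraph (Subgroup.center G)) (groupCommGraph G))) :=
  stmt_4_general P i l
end

section
/- Let G be a finite group, I and Λ finite index sets, and P a regular Λ×I matrix with entries in G⁰ containing at least one zero entry. Let i,j ∈ I and λ,μ ∈ Λ with (i,λ) ≠ (j,μ). Then the following are equivalent: (1) (i,λ) and (j,μ) are adjacent in the simplified graph G(I,Λ,P); (2) for all x,y ∈ G, (i,x,λ) and (j,y,μ) are adjacent in C(M⁰[G;I,Λ;P]); (3) there exist x,y ∈ G such that (i,x,λ) and (j,y,μ) are adjacent in C(M⁰[G;I,Λ;P]). -/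
variable {G : Type*} [Group G] {I Λ : Type*}

/-- The simplified graph `G(I,Λ,P)` on `I×Λ`: distinct vertices `(i,λ)` and `(j,μ)` are
adjacent iff `p_{λj} = 0` and `p_{μi} = 0`. -/
def simpGraph (P : Λ → I → Option G) : SimpleGraph (I × Λ) where
  Adj a b := a ≠ b ∧ P a.2 b.1 = none ∧ P b.2 a.1 = none
  symm := ⟨fun _ _ h => ⟨h.1.symm, h.2.2, h.2.1⟩⟩
  loopless := ⟨fun _ h => h.1 rfl⟩

theorem reesMul_comm_iff_of_ne (P : Λ → I → Option G) {i j : I} {l m : Λ}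
    (hne : (i, l) ≠ (j, m)) (x y : G) :
    reesMul P (some (i, x, l)) (some (j, y, m)) = reesMul P (some (j, y, m)) (some (i, x, l)) ↔
      P l j = none ∧ P m i = none := by
  -- two nonzero products would be `(i, _, m)` and `(j, _, l)`, which differ since `(i, l) ≠ (j, m)`
  simp only [reesMul]
  cases P l j <;> cases P m i <;> simp_all [eq_comm]

theorem commGraph_adj_iff_simpGraph_adj (P : Λ → I → Option G) {i j : I} {l m : Λ}
    (hne : (i, l) ≠ (j, m)) (x y : G) :
    (commGraph P).Adj (i, x, l) (j, y, m) ↔ (simpGraph P).Adj (i, l) (j, m) := by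
  have hne' : (i, x, l) ≠ (j, y, m) := fun h => hne (by simp_all)
  simp only [commGraph, simpGraph, reesMul_comm_iff_of_ne P hne, ne_eq, hne, hne',
    not_false_eq_true, true_and]

theorem stmt_5_general (P : Λ → I → Option G)
    (i j : I) (l m : Λ) (hne : (i, l) ≠ (j, m)) :
    ((simpGraph P).Adj (i, l) (j, m) ↔
        ∀ x y : G, (commGraph P).Adj (i, x, l) (j, y, m)) ∧
    ((∀ x y : G, (commGraph P).Adj (i, x, l) (j, y, m)) ↔
        ∃ x y : G, (commGraph P).Adj (i, x, l) (j, y, m)) := by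
  simp only [commGraph_adj_iff_simpGraph_adj P hne, forall_const, exists_const, and_self]

/-- For `(i,λ) ≠ (j,μ)`, the following are equivalent: adjacency of `(i,λ)` and `(j,μ)` in
`G(I,Λ,P)`; adjacency of `(i,x,λ)` and `(j,y,μ)` in `C(M⁰[G;I,Λ;P])` for all `x,y ∈ G`;
the same for some `x,y ∈ G`. -/
theorem stmt_5 [Fintype G] [Fintype I] [Fintype Λ] (P : Λ → I → Option G)
    (hrow : ∀ l : Λ, ∃ i : I, P l i ≠ none)
    (hcol : ∀ i : I, ∃ l : Λ, P l i ≠ none)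
    (hzero : ∃ (i : I) (l : Λ), P l i = none)
    (i j : I) (l m : Λ) (hne : (i, l) ≠ (j, m)) :
    ((simpGraph P).Adj (i, l) (j, m) ↔
        ∀ x y : G, (commGraph P).Adj (i, x, l) (j, y, m)) ∧
    ((∀ x y : G, (commGraph P).Adj (i, x, l) (j, y, m)) ↔
        ∃ x y : G, (commGraph P).Adj (i, x, l) (j, y, m)) :=
  stmt_5_general P i j l m hne
end

section
/- Let G be a finite group, I and Λ finite index sets, and P a regular Λ×I matrix with entries in G⁰ containing at least one zero entry. Then the commuting graph C(M⁰[G;I,Λ;P]) is connected if and only if the simplified graph G(I,Λ,P) is connected. -/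
variable {G : Type*} [Group G] {I Λ : Type*}

/-!
A commuting pair `(i,x,λ)(j,y,μ) = (j,y,μ)(i,x,λ)` either has both products zero, which is exactly
adjacency of `(i,λ)` and `(j,μ)` in `G(I,Λ,P)`, or has both products non-zero, which forces
`(i,λ) = (j,μ)`. So forgetting the group coordinate maps paths of `C(M⁰[G;I,Λ;P])` onto paths of
`G(I,Λ,P)`, and conversely every path of `G(I,Λ,P)` lifts with any constant group coordinate.
Finally a zero entry `p_{λ₀i₀} = 0` makes all of `{i₀} × G × {λ₀}` pairwise adjacent, which
connects the different lifts.
-/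

namespace SimpleGraph

variable {V W : Type*} {G₁ : SimpleGraph V} {G₂ : SimpleGraph W}

theorem Reachable.lift (f : V → W) (hf : ∀ a b, G₁.Adj a b → G₂.Reachable (f a) (f b)) {a b : V}
    (h : G₁.Reachable a b) : G₂.Reachable (f a) (f b) := by
  rw [reachable_iff_reflTransGen] at h ⊢
  exact Relation.ReflTransGen.lift' f
    (fun a b hab => (reachable_iff_reflTransGen _ _).1 (hf a b hab)) _ _ h

theorem Preconnected.lift (f : V → W) (hsurj : Function.Surjective f)
    (hf : ∀ a b, G₁.Adj a b → G₂.Reachable (f a) (f b)) (hG : G₁.Preconnected) : G₂.Preconnected :=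
  hsurj.forall₂.2 fun a b => (hG a b).lift f hf

end SimpleGraph

open SimpleGraph

variable (P : Λ → I → Option G)

theorem commGraph_adj_of_eq_none_s8 {i j : I} {l m : Λ} {x y : G} (hne : (i, x, l) ≠ (j, y, m))
    (hlj : P l j = none) (hmi : P m i = none) : (commGraph P).Adj (i, x, l) (j, y, m) :=
  ⟨hne, by simp [reesMul, hlj, hmi]⟩

theorem eq_or_simpGraph_adj_of_commGraph_adj {i j : I} {l m : Λ} {x y : G}
    (h : (commGraph P).Adj (i, x, l) (j, y, m)) :
    (i, l) = (j, m) ∨ (simpGraph P).Adj (i, l) (j, m) := by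
  obtain ⟨-, hcomm⟩ := h
  rcases hlj : P l j with _ | p <;> rcases hmi : P m i with _ | q <;>
    simp only [reesMul, hlj, hmi, Option.map_none, Option.map_some, reduceCtorEq,
      Option.some.injEq, Prod.mk.injEq] at hcomm
  · by_cases heq : (i, l) = (j, m)
    · exact .inl heq
    · exact .inr ⟨heq, hlj, hmi⟩
  · exact .inl (by rw [hcomm.1, hcomm.2.2])

def simpGraphHom (x : G) : simpGraph P →g commGraph P where
  toFun a := (a.1, x, a.2)
  map_rel' {a b} h := commGraph_adj_of_eq_none_s8 P (by simpa [Prod.ext_iff] using h.1) h.2.1 h.2.2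

theorem commGraph_reachable_of_eq_none {i : I} {l : Λ} (h : P l i = none) (x y : G) :
    (commGraph P).Reachable (i, x, l) (i, y, l) := by
  by_cases hxy : x = y
  · rw [hxy]
  · exact (commGraph_adj_of_eq_none_s8 P (by simp [hxy]) h h).reachable

theorem stmt_8_general (P : Λ → I → Option G)
    (hzero : ∃ (i : I) (l : Λ), P l i = none) :
    (commGraph P).Connected ↔ (simpGraph P).Connected := by
  obtain ⟨i₀, l₀, h₀⟩ := hzero
  constructor
  · intro hC
    refine (connected_iff _).2 ⟨hC.preconnected.lift (fun a => (a.1, a.2.2))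
      (fun a => ⟨(a.1, 1, a.2), rfl⟩) ?_, ⟨(i₀, l₀)⟩⟩
    rintro ⟨i, x, l⟩ ⟨j, y, m⟩ hadj
    rcases eq_or_simpGraph_adj_of_commGraph_adj P hadj with heq | hadj'
    · exact heq ▸ Reachable.rfl
    · exact hadj'.reachable
  · intro hS
    refine (connected_iff _).2 ⟨?_, ⟨(i₀, 1, l₀)⟩⟩
    rintro ⟨i, x, l⟩ ⟨j, y, m⟩
    exact ((hS.preconnected (i, l) (i₀, l₀)).map (simpGraphHom P x)).trans <|
      (commGraph_reachable_of_eq_none P h₀ x y).trans <|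
        (hS.preconnected (i₀, l₀) (j, m)).map (simpGraphHom P y)

/-- `C(M⁰[G;I,Λ;P])` is connected if and only if `G(I,Λ,P)` is connected. -/
theorem stmt_8 [Fintype G] [Fintype I] [Fintype Λ] (P : Λ → I → Option G)
    (hrow : ∀ l : Λ, ∃ i : I, P l i ≠ none)
    (hcol : ∀ i : I, ∃ l : Λ, P l i ≠ none)
    (hzero : ∃ (i : I) (l : Λ), P l i = none) :
    (commGraph P).Connected ↔ (simpGraph P).Connected :=
  stmt_8_general P hzero
end

section
/- Let G be a finite group, I and Λ finite index sets, and P a regular Λ×I matrix with entries in G⁰ containing at least one zero entry. Let C be a clique in C(M⁰[G;I,Λ;P]) and let R = {(i,λ) ∈ I×Λ : (i,x,λ) ∈ C for some x ∈ G}. Then: (1) for all (i,λ),(j,μ) ∈ R with (i,λ) ≠ (j,μ), we have p_{λj} = 0 and p_{μi} = 0; (2) if none of O_{1×3}, O_{3×1}, O_{2×2} is a ↔-submatrix of the zero-pattern of P, then |R| ≤ 3; (3) if neither O_{1×2} nor O_{2×1} is a ↔-submatrix of the zero-pattern of P, then |R| ≤ 2. -/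
variable {G : Type*} [Group G] {I Λ : Type*}

/-- The all-zeros matrix `O_{n×m}` is a ↔-submatrix of the zero-pattern of `P`: there are
an `n`-element set of rows and an `m`-element set of columns all of whose entries are zero. -/
def OSub (P : Λ → I → Option G) (n m : ℕ) : Prop :=
  ∃ (Λ' : Finset Λ) (I' : Finset I), Λ'.card = n ∧ I'.card = m ∧
    ∀ l ∈ Λ', ∀ i ∈ I', P l i = none

/-!
Two elements `(i,x,λ)`, `(j,y,μ)` with `(i,λ) ≠ (j,μ)` commute only if both products are `0`,
because a nonzero product in one order has indices `(i,μ)` and in the other `(j,λ)`. So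
`p_{λj} = 0` for all distinct `(i,λ)`, `(j,μ)` in `R`. A member `(i,λ)` of `R` that shares its
row or column with another member also has `p_{λi} = 0`, and then row `λ` vanishes on all
columns of `R` and column `i` on all rows of `R`. Hence if two members of `R` share a row or a
column we get a long zero row or column segment, and otherwise `R` meets every row and column
at most once, so splitting it into two parts of sizes `a + b ≤ |R|` gives a zero `a × b` block.
-/

open Finset

lemma eq_none_of_reesMul_comm {P : Λ → I → Option G} {i j : I} {x y : G} {l m : Λ}
    (hne : (i, l) ≠ (j, m))
    (h : reesMul P (some (i, x, l)) (some (j, y, m)) =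
      reesMul P (some (j, y, m)) (some (i, x, l))) :
    P l j = none := by
  cases hlj : P l j with
  | none => rfl
  | some a =>
    cases hmi : P m i <;> simp_all [reesMul]

lemma pairwise_eq_none_of_isClique {P : Λ → I → Option G} {C : Set (I × G × Λ)}
    (hC : (commGraph P).IsClique C) :
    {q : I × Λ | ∃ x : G, (q.1, x, q.2) ∈ C}.Pairwise fun p q => P p.2 q.1 = none := by
  rintro ⟨i, l⟩ ⟨x, hx⟩ ⟨j, m⟩ ⟨y, hy⟩ hne
  have hxy : (i, x, l) ≠ (j, y, m) := by
    rintro ⟨⟩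
    exact hne rfl
  exact eq_none_of_reesMul_comm hne (hC hx hy hxy).2

section Pairwise

variable {α : Type*} {P : Λ → I → Option α} {R : Finset (I × Λ)}

lemma diag_eq_none_of_snd_eq (hR : (R : Set (I × Λ)).Pairwise fun p q => P p.2 q.1 = none)
    {p q : I × Λ} (hp : p ∈ R) (hq : q ∈ R) (hpq : p ≠ q) (h : p.2 = q.2) :
    P p.2 p.1 = none :=
  h ▸ hR hq hp hpq.symm

lemma diag_eq_none_of_fst_eq (hR : (R : Set (I × Λ)).Pairwise fun p q => P p.2 q.1 = none)
    {p q : I × Λ} (hp : p ∈ R) (hq : q ∈ R) (hpq : p ≠ q) (h : p.1 = q.1) :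
    P p.2 p.1 = none :=
  h ▸ hR hp hq hpq

variable [DecidableEq I] [DecidableEq Λ] {n m : ℕ}

lemma osub_of_subset (hR : (R : Set (I × Λ)).Pairwise fun p q => P p.2 q.1 = none)
    {A B : Finset (I × Λ)} (hA : A ⊆ R) (hB : B ⊆ R)
    (hAB : ∀ p ∈ A, p ∈ B → P p.2 p.1 = none)
    (hn : n ≤ #(A.image Prod.snd)) (hm : m ≤ #(B.image Prod.fst)) : OSub P n m := by
  obtain ⟨L, hL, rfl⟩ := exists_subset_card_eq hn
  obtain ⟨J, hJ, rfl⟩ := exists_subset_card_eq hm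
  refine ⟨L, J, rfl, rfl, fun l hl j hj => ?_⟩
  obtain ⟨p, hp, rfl⟩ := mem_image.1 (hL hl)
  obtain ⟨q, hq, rfl⟩ := mem_image.1 (hJ hj)
  by_cases hpq : p = q
  · subst hpq
    exact hAB p hp hq
  · exact hR (hA hp) (hB hq) hpq

lemma osub_one_of_snd_eq (hR : (R : Set (I × Λ)).Pairwise fun p q => P p.2 q.1 = none)
    {p q : I × Λ} (hp : p ∈ R) (hq : q ∈ R) (hpq : p ≠ q) (h : p.2 = q.2)
    (hm : m ≤ #(R.image Prod.fst)) : OSub P 1 m :=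
  osub_of_subset hR (singleton_subset_iff.2 hp) subset_rfl
    (fun _ hr _ => mem_singleton.1 hr ▸ diag_eq_none_of_snd_eq hR hp hq hpq h) (by simp) hm

lemma osub_one_of_fst_eq (hR : (R : Set (I × Λ)).Pairwise fun p q => P p.2 q.1 = none)
    {p q : I × Λ} (hp : p ∈ R) (hq : q ∈ R) (hpq : p ≠ q) (h : p.1 = q.1)
    (hn : n ≤ #(R.image Prod.snd)) : OSub P n 1 :=
  osub_of_subset hR subset_rfl (singleton_subset_iff.2 hp)
    (fun _ _ hr => mem_singleton.1 hr ▸ diag_eq_none_of_fst_eq hR hp hq hpq h) hn (by simp)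

lemma osub_two_two_of_snd_eq_of_fst_eq
    (hR : (R : Set (I × Λ)).Pairwise fun p q => P p.2 q.1 = none)
    {p q s t : I × Λ} (hp : p ∈ R) (hq : q ∈ R) (hpq : p ≠ q) (hpq₂ : p.2 = q.2)
    (hs : s ∈ R) (ht : t ∈ R) (hst : s ≠ t) (hst₁ : s.1 = t.1) : OSub P 2 2 := by
  refine osub_of_subset hR (A := {s, t}) (B := {p, q}) (by simp [insert_subset_iff, hs, ht])
    (by simp [insert_subset_iff, hp, hq]) ?_ ?_ ?_
  · rintro r - hr
    rcases mem_insert.1 hr with rfl | hr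
    · exact diag_eq_none_of_snd_eq hR hp hq hpq hpq₂
    · exact mem_singleton.1 hr ▸ diag_eq_none_of_snd_eq hR hq hp hpq.symm hpq₂.symm
  · rw [image_insert, image_singleton, card_pair fun h => hst (Prod.ext hst₁ h)]
  · rw [image_insert, image_singleton, card_pair fun h => hpq (Prod.ext h hpq₂)]

lemma osub_of_injOn (hR : (R : Set (I × Λ)).Pairwise fun p q => P p.2 q.1 = none)
    (hfst : Set.InjOn Prod.fst (R : Set (I × Λ))) (hsnd : Set.InjOn Prod.snd (R : Set (I × Λ)))
    (h : n + m ≤ #R) : OSub P n m := by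
  obtain ⟨A, hA, hAn⟩ := exists_subset_card_eq (show n ≤ #R by omega)
  refine osub_of_subset hR hA sdiff_subset (fun p hpA hpB => absurd hpA (mem_sdiff.1 hpB).2) ?_ ?_
  · rw [card_image_of_injOn (hsnd.mono (coe_subset.2 hA)), hAn]
  · rw [card_image_of_injOn (hfst.mono (coe_subset.2 sdiff_subset)), card_sdiff_of_subset hA]
    omega

lemma osub_one_two_or_two_one (hR : (R : Set (I × Λ)).Pairwise fun p q => P p.2 q.1 = none)
    (hR3 : 3 ≤ #R) : OSub P 1 2 ∨ OSub P 2 1 := by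
  by_cases hsnd : Set.InjOn Prod.snd (R : Set (I × Λ))
  · by_cases hfst : Set.InjOn Prod.fst (R : Set (I × Λ))
    · exact .inl (osub_of_injOn hR hfst hsnd (by omega))
    · simp only [Set.InjOn, mem_coe, not_forall] at hfst
      obtain ⟨s, hs, t, ht, hst₁, hst⟩ := hfst
      refine .inr (osub_one_of_fst_eq hR hs ht hst hst₁ (one_lt_card.2 ?_))
      exact ⟨s.2, mem_image_of_mem _ hs, t.2, mem_image_of_mem _ ht,
        fun h => hst (Prod.ext hst₁ h)⟩
  · simp only [Set.InjOn, mem_coe, not_forall] at hsnd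
    obtain ⟨p, hp, q, hq, hpq₂, hpq⟩ := hsnd
    refine .inl (osub_one_of_snd_eq hR hp hq hpq hpq₂ (one_lt_card.2 ?_))
    exact ⟨p.1, mem_image_of_mem _ hp, q.1, mem_image_of_mem _ hq,
      fun h => hpq (Prod.ext h hpq₂)⟩

lemma osub_one_three_or_three_one_or_two_two
    (hR : (R : Set (I × Λ)).Pairwise fun p q => P p.2 q.1 = none) (hR4 : 4 ≤ #R) :
    OSub P 1 3 ∨ OSub P 3 1 ∨ OSub P 2 2 := by
  by_cases hsnd : Set.InjOn Prod.snd (R : Set (I × Λ)) <;>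
    by_cases hfst : Set.InjOn Prod.fst (R : Set (I × Λ)) <;>
    simp only [Set.InjOn, mem_coe, not_forall] at hsnd hfst
  · exact .inr (.inr (osub_of_injOn hR hfst hsnd (by omega)))
  · obtain ⟨s, hs, t, ht, hst₁, hst⟩ := hfst
    exact .inr (.inl (osub_one_of_fst_eq hR hs ht hst hst₁
      (by rw [card_image_of_injOn hsnd]; omega)))
  · obtain ⟨p, hp, q, hq, hpq₂, hpq⟩ := hsnd
    exact .inl (osub_one_of_snd_eq hR hp hq hpq hpq₂ (by rw [card_image_of_injOn hfst]; omega))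
  · obtain ⟨p, hp, q, hq, hpq₂, hpq⟩ := hsnd
    obtain ⟨s, hs, t, ht, hst₁, hst⟩ := hfst
    exact .inr (.inr (osub_two_two_of_snd_eq_of_fst_eq hR hp hq hpq hpq₂ hs ht hst hst₁))

end Pairwise

lemma ncard_le_two_of_pairwise {α : Type*} {P : Λ → I → Option α} {S : Set (I × Λ)}
    (hS : S.Pairwise fun p q => P p.2 q.1 = none) (h12 : ¬ OSub P 1 2) (h21 : ¬ OSub P 2 1) :
    S.ncard ≤ 2 := by
  classical
  by_contra! h
  have hfin : S.Finite := Set.finite_of_ncard_pos (by omega)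
  rw [Set.ncard_eq_toFinset_card S hfin] at h
  rcases osub_one_two_or_two_one (by rwa [hfin.coe_toFinset]) h with h | h <;> contradiction

lemma ncard_le_three_of_pairwise {α : Type*} {P : Λ → I → Option α} {S : Set (I × Λ)}
    (hS : S.Pairwise fun p q => P p.2 q.1 = none) (h13 : ¬ OSub P 1 3) (h31 : ¬ OSub P 3 1)
    (h22 : ¬ OSub P 2 2) : S.ncard ≤ 3 := by
  classical
  by_contra! h
  have hfin : S.Finite := Set.finite_of_ncard_pos (by omega)
  rw [Set.ncard_eq_toFinset_card S hfin] at h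
  rcases osub_one_three_or_three_one_or_two_two (by rwa [hfin.coe_toFinset]) h with h | h | h <;>
    contradiction

theorem stmt_11_general (P : Λ → I → Option G)
    (C : Set (I × G × Λ)) (hC : (commGraph P).IsClique C) :
    (∀ (i j : I) (l m : Λ),
        (i, l) ∈ {q : I × Λ | ∃ x : G, (q.1, x, q.2) ∈ C} →
        (j, m) ∈ {q : I × Λ | ∃ x : G, (q.1, x, q.2) ∈ C} →
        (i, l) ≠ (j, m) → P l j = none ∧ P m i = none) ∧
    (¬ OSub P 1 3 → ¬ OSub P 3 1 → ¬ OSub P 2 2 →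
      {q : I × Λ | ∃ x : G, (q.1, x, q.2) ∈ C}.ncard ≤ 3) ∧
    (¬ OSub P 1 2 → ¬ OSub P 2 1 →
      {q : I × Λ | ∃ x : G, (q.1, x, q.2) ∈ C}.ncard ≤ 2) := by
  have hR := pairwise_eq_none_of_isClique hC
  exact ⟨fun _ _ _ _ hil hjm hne => ⟨hR hil hjm hne, hR hjm hil hne.symm⟩,
    ncard_le_three_of_pairwise hR, ncard_le_two_of_pairwise hR⟩

/-- Properties of a clique `C` in `C(M⁰[G;I,Λ;P])` and of the associated set
`R = {(i,λ) : (i,x,λ) ∈ C for some x}`: (1) distinct members `(i,λ),(j,μ)` of `R` satisfy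
`p_{λj} = p_{μi} = 0`; (2) if none of `O_{1×3}, O_{3×1}, O_{2×2}` is a ↔-submatrix of the
zero-pattern of `P`, then `|R| ≤ 3`; (3) if neither `O_{1×2}` nor `O_{2×1}` is, then
`|R| ≤ 2`. -/
theorem stmt_11 [Fintype G] [Fintype I] [Fintype Λ] (P : Λ → I → Option G)
    (hrow : ∀ l : Λ, ∃ i : I, P l i ≠ none)
    (hcol : ∀ i : I, ∃ l : Λ, P l i ≠ none)
    (hzero : ∃ (i : I) (l : Λ), P l i = none)
    (C : Set (I × G × Λ)) (hC : (commGraph P).IsClique C) :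
    (∀ (i j : I) (l m : Λ),
        (i, l) ∈ {q : I × Λ | ∃ x : G, (q.1, x, q.2) ∈ C} →
        (j, m) ∈ {q : I × Λ | ∃ x : G, (q.1, x, q.2) ∈ C} →
        (i, l) ≠ (j, m) → P l j = none ∧ P m i = none) ∧
    (¬ OSub P 1 3 → ¬ OSub P 3 1 → ¬ OSub P 2 2 →
      {q : I × Λ | ∃ x : G, (q.1, x, q.2) ∈ C}.ncard ≤ 3) ∧
    (¬ OSub P 1 2 → ¬ OSub P 2 1 →
      {q : I × Λ | ∃ x : G, (q.1, x, q.2) ∈ C}.ncard ≤ 2) :=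
  stmt_11_general P C hC
end

section
/- Let G be a finite abelian group, I and Λ finite index sets, and P a regular Λ×I matrix with entries in G⁰ containing at least one zero entry. (1) If D₃is a ↔-submatrix of the zero-pattern of P and none of O_{1×3}, O_{3×1}, O_{2×2} is a ↔-submatrix of the zero-pattern of P, then the clique number of C(M⁰[G;I,Λ;P]) equals 3|G|. (2) If D₂ is a ↔-submatrix of the zero-pattern of P and neither O_{1×2} nor O_{2×1} is a ↔-submatrix of the zero-pattern of P, then the clique number of C(M⁰[G;I,Λ;P]) equals 2|G|. -/
variable {G : Type*} [Group G] {I Λ : Type*}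

/-- The matrix `D_k` (the `k×k` matrix with non-zero diagonal entries and zeros elsewhere)
is a ↔-submatrix of the zero-pattern of `P`. -/
def DSub (P : Λ → I → Option G) (k : ℕ) : Prop :=
  ∃ (f : Fin k → I) (g : Fin k → Λ), Function.Injective f ∧ Function.Injective g ∧
    (∀ j, P (g j) (f j) ≠ none) ∧ ∀ j j', j ≠ j' → P (g j) (f j') = none

/-!
Group the elements `(i, x, λ)` of `M⁰[G;I,Λ;P]` into cells `(i, λ)`. For abelian `G` two distinct
elements commute exactly when they lie in the same cell or when their cells `(i, λ)`, `(j, μ)`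
satisfy `p_{λj} = p_{μi} = 0`. Hence the maximal cliques of the commuting graph are unions of
whole cells forming a set of pairwise annihilating cells, and the clique number is `|G|` times
the largest size of such a set. A `D_k` supplies `k` annihilating cells. Conversely, among
annihilating cells two sharing a row make that row vanish on all their columns, while cells in
distinct rows give zeros in a single column; so `k + 1` annihilating cells produce one of the
excluded all-zero submatrices.
-/

section Cells

variable {P : Λ → I → Option G}

/-- The cell `(i, λ)` stands for `{i} × G × {λ}`; `T` is annihilating when the product of elements
from two distinct cells of `T` is always `0`. -/
def CellsAnnihilate {α : Type*} (P : Λ → I → Option α) (T : Set (I × Λ)) : Prop :=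
  T.Pairwise fun c d => P c.2 d.1 = none

lemma commGraph_adj_of_same_cell (habel : ∀ a b : G, a * b = b * a) {i : I} {l : Λ} {x y : G}
    (hxy : x ≠ y) : (commGraph P).Adj (i, x, l) (i, y, l) := by
  refine ⟨by simpa using hxy, ?_⟩
  cases h : P l i with
  | none => simp [reesMul, h]
  | some p =>
    have hcomm : x * p * y = y * p * x := by
      rw [habel x p, mul_assoc, habel x y, ← mul_assoc, habel p y]
    simp [reesMul, h, hcomm]

lemma commGraph_adj_iff_of_cell_ne {i j : I} {l m : Λ} {x y : G} (h : (i, l) ≠ (j, m)) :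
    (commGraph P).Adj (i, x, l) (j, y, m) ↔ P l j = none ∧ P m i = none := by
  have hne : (i, x, l) ≠ (j, y, m) := fun he => h (by simp_all)
  simp only [commGraph, reesMul, ne_eq, hne, not_false_eq_true, true_and]
  cases P l j <;> cases P m i <;> simp_all [eq_comm]

end Cells

namespace CellsAnnihilate

variable {α : Type*} {P : Λ → I → Option α}

lemma eq_none_of_snd_eq {T : Set (I × Λ)} (hT : CellsAnnihilate P T) {u v w : I × Λ}
    (hu : u ∈ T) (hv : v ∈ T) (huv : u ≠ v) (hrow : u.2 = v.2) (hw : w ∈ T) :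
    P u.2 w.1 = none := by
  rcases eq_or_ne u w with rfl | huw
  · rw [hrow]
    exact hT hv hu huv.symm
  · exact hT hu hw huw

lemma oSub_card_sub_one_one {T : Finset (I × Λ)} (hT : CellsAnnihilate P T)
    (hinj : Set.InjOn Prod.snd (T : Set (I × Λ))) {a : I × Λ} (ha : a ∈ T) :
    OSub P (T.card - 1) 1 := by
  classical
  refine ⟨(T.erase a).image Prod.snd, {a.1}, ?_, Finset.card_singleton _, ?_⟩
  · rw [Finset.card_image_of_injOn (hinj.mono (Finset.coe_subset.mpr (T.erase_subset a))),
      Finset.card_erase_of_mem ha]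
  · intro l hl i hi
    obtain ⟨c, hc, rfl⟩ := Finset.mem_image.mp hl
    rw [Finset.mem_singleton.mp hi]
    exact hT (Finset.mem_of_mem_erase hc) ha (Finset.ne_of_mem_erase hc)

lemma oSub_of_card_eq_three {T : Finset (I × Λ)} (hT : CellsAnnihilate P T)
    (hcard : T.card = 3) : OSub P 1 2 ∨ OSub P 2 1 := by
  classical
  by_cases hinj : Set.InjOn Prod.snd (T : Set (I × Λ))
  · obtain ⟨a, ha⟩ : T.Nonempty := Finset.card_pos.mp (by omega)
    exact Or.inr (by simpa [hcard] using hT.oSub_card_sub_one_one hinj ha)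
  · obtain ⟨u, hu, v, hv, hrow, huv⟩ : ∃ u ∈ T, ∃ v ∈ T, u.2 = v.2 ∧ u ≠ v := by
      simpa [Set.InjOn] using hinj
    refine Or.inl ⟨{u.2}, {u.1, v.1}, Finset.card_singleton _,
      Finset.card_pair fun h => huv (Prod.ext h hrow), ?_⟩
    simp only [Finset.mem_singleton, Finset.mem_insert]
    rintro l rfl i (rfl | rfl)
    · exact hT.eq_none_of_snd_eq hu hv huv hrow hu
    · exact hT.eq_none_of_snd_eq hu hv huv hrow hv

lemma oSub_of_card_eq_four {T : Finset (I × Λ)} (hT : CellsAnnihilate P T)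
    (hcard : T.card = 4) : OSub P 1 3 ∨ OSub P 3 1 ∨ OSub P 2 2 := by
  classical
  by_cases hinj : Set.InjOn Prod.snd (T : Set (I × Λ))
  · obtain ⟨a, ha⟩ : T.Nonempty := Finset.card_pos.mp (by omega)
    exact Or.inr (Or.inl (by simpa [hcard] using hT.oSub_card_sub_one_one hinj ha))
  obtain ⟨u, hu, v, hv, hrow, huv⟩ : ∃ u ∈ T, ∃ v ∈ T, u.2 = v.2 ∧ u ≠ v := by
    simpa [Set.InjOn] using hinj
  have huv₁ : u.1 ≠ v.1 := fun h => huv (Prod.ext h hrow)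
  have hrow_none : ∀ {w}, w ∈ T → P u.2 w.1 = none := hT.eq_none_of_snd_eq hu hv huv hrow
  obtain ⟨w, hw, hwuv⟩ := Finset.exists_mem_notMem_of_card_lt_card
    (s := {u, v}) (t := T) (by have := Finset.card_le_two (a := u) (b := v); omega)
  obtain ⟨hwu, hwv⟩ : w ≠ u ∧ w ≠ v := by simpa [not_or] using hwuv
  by_cases hw₂ : w.2 = u.2
  · have hwu₁ : w.1 ≠ u.1 := fun h => hwu (Prod.ext h hw₂)
    have hwv₁ : w.1 ≠ v.1 := fun h => hwv (Prod.ext h (hw₂.trans hrow))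
    refine Or.inl ⟨{u.2}, {u.1, v.1, w.1}, Finset.card_singleton _, ?_, ?_⟩
    · rw [Finset.card_insert_of_notMem (by simp [huv₁, hwu₁.symm]), Finset.card_pair hwv₁.symm]
    · simp only [Finset.mem_singleton, Finset.mem_insert]
      rintro l rfl i (rfl | rfl | rfl)
      exacts [hrow_none hu, hrow_none hv, hrow_none hw]
  · refine Or.inr (Or.inr ⟨{u.2, w.2}, {u.1, v.1}, Finset.card_pair (Ne.symm hw₂),
      Finset.card_pair huv₁, ?_⟩)
    simp only [Finset.mem_insert, Finset.mem_singleton]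
    rintro l (rfl | rfl) i (rfl | rfl)
    exacts [hrow_none hu, hrow_none hv, hT hw hu hwu, hT hw hv hwv]

end CellsAnnihilate

lemma DSub.exists_cellsAnnihilate {α : Type*} {P : Λ → I → Option α} {k : ℕ} (hD : DSub P k) :
    ∃ T : Finset (I × Λ), CellsAnnihilate P T ∧ T.card = k := by
  classical
  obtain ⟨f, g, hf, -, -, hzero⟩ := hD
  refine ⟨Finset.univ.image fun j => (f j, g j), ?_, ?_⟩
  · simp only [Finset.coe_image, Finset.coe_univ, Set.image_univ]
    rintro _ ⟨j, rfl⟩ _ ⟨j', rfl⟩ hjj'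
    exact hzero j j' fun h => hjj' (h ▸ rfl)
  · rw [Finset.card_image_of_injective _ fun j j' h => hf (Prod.ext_iff.mp h).1,
      Finset.card_univ, Fintype.card_fin]

section CliqueNum

variable [Fintype G] {P : Λ → I → Option G}

lemma le_cliqueNum_commGraph [Finite I] [Finite Λ] (habel : ∀ a b : G, a * b = b * a) {T : Finset (I × Λ)}
    (hT : CellsAnnihilate P T) : T.card * Fintype.card G ≤ (commGraph P).cliqueNum := by
  classical
  let s := (T ×ˢ (Finset.univ : Finset G)).image fun q => (q.1.1, q.2, q.1.2)
  have hclique : (commGraph P).IsClique (s : Set (I × G × Λ)) := by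
    simp only [s, Finset.coe_image, Finset.coe_product, Finset.coe_univ]
    rintro _ ⟨⟨⟨i, l⟩, x⟩, hc, rfl⟩ _ ⟨⟨⟨j, m⟩, y⟩, hd, rfl⟩ hne
    dsimp only at hne ⊢
    by_cases hcell : (i, l) = (j, m)
    · obtain ⟨rfl, rfl⟩ := Prod.ext_iff.mp hcell
      exact commGraph_adj_of_same_cell habel (by rintro rfl; exact hne rfl)
    · exact (commGraph_adj_iff_of_cell_ne hcell).mpr
        ⟨hT hc.1 hd.1 hcell, hT hd.1 hc.1 (Ne.symm hcell)⟩
  have hcard : s.card = T.card * Fintype.card G := by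
    rw [Finset.card_image_of_injective _ (by rintro ⟨⟨i, l⟩, x⟩ ⟨⟨j, m⟩, y⟩ h; simp_all),
      Finset.card_product, Finset.card_univ]
  exact hcard ▸ hclique.card_le_cliqueNum

lemma cliqueNum_commGraph_le {k : ℕ}
    (h : ∀ T : Finset (I × Λ), CellsAnnihilate P T → T.card ≠ k + 1) :
    (commGraph P).cliqueNum ≤ k * Fintype.card G := by
  classical
  obtain ⟨s, hs⟩ := (commGraph P).exists_isNClique_cliqueNum
  let cells := s.image fun v => (v.1, v.2.2)
  have hcells : CellsAnnihilate P cells := by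
    intro _ hc _ hd hcd
    obtain ⟨⟨i, x, l⟩, ha, rfl⟩ := Finset.mem_image.mp hc
    obtain ⟨⟨j, y, m⟩, hb, rfl⟩ := Finset.mem_image.mp hd
    exact ((commGraph_adj_iff_of_cell_ne hcd).mp
      (hs.isClique ha hb fun hab => hcd (by simp_all))).1
  have hsize : cells.card ≤ k := by
    by_contra! hk
    obtain ⟨T, hTsub, hTcard⟩ := Finset.exists_subset_card_eq (Nat.succ_le_of_lt hk)
    exact h T (Set.Pairwise.mono (Finset.coe_subset.mpr hTsub) hcells) hTcard
  calc (commGraph P).cliqueNum = s.card := hs.card_eq.symm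
    _ ≤ (cells ×ˢ (Finset.univ : Finset G)).card :=
      Finset.card_le_card_of_injOn (fun v => ((v.1, v.2.2), v.2.1))
        (fun v hv => Finset.mem_product.mpr ⟨Finset.mem_image_of_mem _ hv, Finset.mem_univ _⟩)
        (fun v _ w _ hvw => by simp_all [Prod.ext_iff])
    _ = cells.card * Fintype.card G := by rw [Finset.card_product, Finset.card_univ]
    _ ≤ k * Fintype.card G := Nat.mul_le_mul_right _ hsize

theorem cliqueNum_commGraph_eq [Finite I] [Finite Λ] (habel : ∀ a b : G, a * b = b * a) {k : ℕ} (hD : DSub P k)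
    (h : ∀ T : Finset (I × Λ), CellsAnnihilate P T → T.card ≠ k + 1) :
    (commGraph P).cliqueNum = k * Fintype.card G := by
  obtain ⟨T, hT, rfl⟩ := hD.exists_cellsAnnihilate
  exact (cliqueNum_commGraph_le h).antisymm (le_cliqueNum_commGraph habel hT)

end CliqueNum

theorem stmt_13_general [Fintype G] [Fintype I] [Fintype Λ] (P : Λ → I → Option G)
    (habel : ∀ a b : G, a * b = b * a) :
    (DSub P 3 → ¬ OSub P 1 3 → ¬ OSub P 3 1 → ¬ OSub P 2 2 →
      (commGraph P).cliqueNum = 3 * Fintype.card G) ∧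
    (DSub P 2 → ¬ OSub P 1 2 → ¬ OSub P 2 1 →
      (commGraph P).cliqueNum = 2 * Fintype.card G) := by
  refine ⟨fun hD h13 h31 h22 => cliqueNum_commGraph_eq habel hD fun T hT hcard => ?_,
    fun hD h12 h21 => cliqueNum_commGraph_eq habel hD fun T hT hcard => ?_⟩
  · rcases hT.oSub_of_card_eq_four hcard with h | h | h
    exacts [h13 h, h31 h, h22 h]
  · rcases hT.oSub_of_card_eq_three hcard with h | h
    exacts [h12 h, h21 h]

/-- For a finite abelian group `G`: (1) if `D₃` is a ↔-submatrix of the zero-pattern of `P`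
and none of `O_{1×3}, O_{3×1}, O_{2×2}` is, then the clique number of `C(M⁰[G;I,Λ;P])`
equals `3|G|`; (2) if `D₂` is a ↔-submatrix and neither `O_{1×2}` nor `O_{2×1}` is, then the
clique number equals `2|G|`. -/
theorem stmt_13 [Fintype G] [Fintype I] [Fintype Λ] (P : Λ → I → Option G)
    (habel : ∀ a b : G, a * b = b * a)
    (hrow : ∀ l : Λ, ∃ i : I, P l i ≠ none)
    (hcol : ∀ i : I, ∃ l : Λ, P l i ≠ none)
    (hzero : ∃ (i : I) (l : Λ), P l i = none) :
    (DSub P 3 → ¬ OSub P 1 3 → ¬ OSub P 3 1 → ¬ OSub P 2 2 →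
      (commGraph P).cliqueNum = 3 * Fintype.card G) ∧
    (DSub P 2 → ¬ OSub P 1 2 → ¬ OSub P 2 1 →
      (commGraph P).cliqueNum = 2 * Fintype.card G) :=
  stmt_13_general P habel
end

section
/- Let G be a trivial group, I and Λ finite index sets, and P a regular Λ×I matrix with entries in G⁰ containing at least one zero entry. If none of the matrices D₃, O_{1×3}, O_{3×1}, O_{2×2}, A, Aᵀ, B, Bᵀ is a ↔-submatrix of the zero-pattern of P, where A = [[0,0,×,×],[×,×,0,0]] and B = [[0,0,×],[×,0,0]], then the commuting graph C(M⁰[G;I,Λ;P]) contains no cycles. -/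
variable {G : Type*} [Group G] {I Λ : Type*}

/-- The matrix `A = [[0,0,×,×],[×,×,0,0]]` is a ↔-submatrix of the zero-pattern of `P`. -/
def ASub (P : Λ → I → Option G) : Prop :=
  ∃ (i₁ i₂ i₃ i₄ : I) (l₁ l₂ : Λ),
    i₁ ≠ i₂ ∧ i₁ ≠ i₃ ∧ i₁ ≠ i₄ ∧ i₂ ≠ i₃ ∧ i₂ ≠ i₄ ∧ i₃ ≠ i₄ ∧ l₁ ≠ l₂ ∧
    P l₁ i₁ = none ∧ P l₁ i₂ = none ∧ P l₂ i₃ = none ∧ P l₂ i₄ = none ∧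
    P l₁ i₃ ≠ none ∧ P l₁ i₄ ≠ none ∧ P l₂ i₁ ≠ none ∧ P l₂ i₂ ≠ none

/-- The matrix `Aᵀ` is a ↔-submatrix of the zero-pattern of `P`. -/
def ATSub (P : Λ → I → Option G) : Prop :=
  ∃ (l₁ l₂ l₃ l₄ : Λ) (i₁ i₂ : I),
    l₁ ≠ l₂ ∧ l₁ ≠ l₃ ∧ l₁ ≠ l₄ ∧ l₂ ≠ l₃ ∧ l₂ ≠ l₄ ∧ l₃ ≠ l₄ ∧ i₁ ≠ i₂ ∧
    P l₁ i₁ = none ∧ P l₂ i₁ = none ∧ P l₃ i₂ = none ∧ P l₄ i₂ = none ∧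
    P l₃ i₁ ≠ none ∧ P l₄ i₁ ≠ none ∧ P l₁ i₂ ≠ none ∧ P l₂ i₂ ≠ none

/-- The matrix `B = [[0,0,×],[×,0,0]]` is a ↔-submatrix of the zero-pattern of `P`. -/
def BSub (P : Λ → I → Option G) : Prop :=
  ∃ (i₁ i₂ i₃ : I) (l₁ l₂ : Λ),
    i₁ ≠ i₂ ∧ i₁ ≠ i₃ ∧ i₂ ≠ i₃ ∧ l₁ ≠ l₂ ∧
    P l₁ i₁ = none ∧ P l₁ i₂ = none ∧ P l₂ i₂ = none ∧ P l₂ i₃ = none ∧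
    P l₁ i₃ ≠ none ∧ P l₂ i₁ ≠ none

/-- The matrix `Bᵀ` is a ↔-submatrix of the zero-pattern of `P`. -/
def BTSub (P : Λ → I → Option G) : Prop :=
  ∃ (l₁ l₂ l₃ : Λ) (i₁ i₂ : I),
    l₁ ≠ l₂ ∧ l₁ ≠ l₃ ∧ l₂ ≠ l₃ ∧ i₁ ≠ i₂ ∧
    P l₁ i₁ = none ∧ P l₂ i₁ = none ∧ P l₂ i₂ = none ∧ P l₃ i₂ = none ∧
    P l₃ i₁ ≠ none ∧ P l₁ i₂ ≠ none

/-!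
For trivial `G` the element `(i, 1, λ)` is just the pair `(i, λ)`, and two distinct such elements
commute exactly when both products vanish, i.e. `p_{λj} = p_{μi} = 0`. The forbidden submatrices
force every row and every column of `P` to have at most two zeros, and at most one row and at
most one column to have two. A vertex `(i, λ)` with two distinct neighbours needs row `λ`
or column `i` to have two zeros. On a cycle every vertex has two neighbours, which again have two
neighbours, and this forces every vertex to lie in the unique row and the unique column with two
zeros; so the cycle has a single vertex, which is absurd.
-/

section ZeroPattern

variable {α β : Type*}

def HasTwoZeros (z : α → β → Prop) (a : α) : Prop :=
  ∃ b b', b ≠ b' ∧ z a b ∧ z a b'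

structure RowSparse (z : α → β → Prop) : Prop where
  eq_or_eq_or_eq : ∀ {a b₁ b₂ b₃}, z a b₁ → z a b₂ → z a b₃ →
    b₁ = b₂ ∨ b₁ = b₃ ∨ b₂ = b₃
  eq_of_hasTwoZeros : ∀ {a a'}, HasTwoZeros z a → HasTwoZeros z a' → a = a'

theorem eq_of_not_hasTwoZeros {z : α → β → Prop} {a : α} {b b' : β}
    (h : ¬ HasTwoZeros z a) (hb : z a b) (hb' : z a b') : b = b' :=
  by_contra fun hne => h ⟨b, b', hne, hb, hb'⟩

end ZeroPattern

namespace SimpleGraph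

variable {V : Type*}

def MinDegreeTwoOn (H : SimpleGraph V) (K : Set V) : Prop :=
  ∀ u ∈ K, ∃ w ∈ K, ∃ w' ∈ K, w ≠ w' ∧ H.Adj u w ∧ H.Adj u w'

theorem Walk.IsCycle.minDegreeTwoOn_support {H : SimpleGraph V} {v : V} {c : H.Walk v v}
    (hc : c.IsCycle) : H.MinDegreeTwoOn {u | u ∈ c.support} := by
  intro u hu
  obtain ⟨w, w', hne, hnbrs⟩ := Set.ncard_eq_two.mp (hc.ncard_neighborSet_toSubgraph_eq_two hu)
  have hw : c.toSubgraph.Adj u w := by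
    rw [← Subgraph.mem_neighborSet, hnbrs]; exact Set.mem_insert _ _
  have hw' : c.toSubgraph.Adj u w' := by
    rw [← Subgraph.mem_neighborSet, hnbrs]; exact Set.mem_insert_of_mem _ rfl
  exact ⟨w, c.mem_verts_toSubgraph.mp hw.snd_mem, w', c.mem_verts_toSubgraph.mp hw'.snd_mem,
    hne, hw.adj_sub, hw'.adj_sub⟩

end SimpleGraph

section ZeroCommGraph

variable {z : Λ → I → Prop}

/-- The commuting graph of `M⁰[1; I, Λ; P]`, where `z λ i` means `p_{λi} = 0`. -/
def zeroCommGraph (z : Λ → I → Prop) : SimpleGraph (I × Λ) where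
  Adj u w := u ≠ w ∧ z u.2 w.1 ∧ z w.2 u.1
  symm := ⟨fun _ _ h => ⟨h.1.symm, h.2.2, h.2.1⟩⟩
  loopless := ⟨fun _ h => h.1 rfl⟩

theorem zeroCommGraph_adj {u w : I × Λ} :
    (zeroCommGraph z).Adj u w ↔ u ≠ w ∧ z u.2 w.1 ∧ z w.2 u.1 :=
  Iff.rfl

theorem zeroCommGraph_flip_adj {u w : Λ × I} :
    (zeroCommGraph (flip z)).Adj u w ↔ (zeroCommGraph z).Adj u.swap w.swap := by
  simp only [zeroCommGraph_adj, ne_eq, Prod.swap_inj, Prod.fst_swap, Prod.snd_swap, flip]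
  tauto

theorem minDegreeTwoOn_zeroCommGraph_flip {K : Set (I × Λ)}
    (hK : (zeroCommGraph z).MinDegreeTwoOn K) :
    (zeroCommGraph (flip z)).MinDegreeTwoOn (Prod.swap ⁻¹' K) := by
  intro u hu
  obtain ⟨w, hw, w', hw', hne, hadj, hadj'⟩ := hK u.swap hu
  exact ⟨w.swap, by simpa using hw, w'.swap, by simpa using hw', by simpa using hne,
    zeroCommGraph_flip_adj.mpr (by simpa using hadj),
    zeroCommGraph_flip_adj.mpr (by simpa using hadj')⟩

theorem hasTwoZeros_or_of_adj_of_adj {u w w' : I × Λ} (hw : (zeroCommGraph z).Adj u w)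
    (hw' : (zeroCommGraph z).Adj u w') (hne : w ≠ w') :
    HasTwoZeros z u.2 ∨ HasTwoZeros (flip z) u.1 := by
  obtain ⟨-, zw, zu⟩ := hw
  obtain ⟨-, zw', zu'⟩ := hw'
  by_cases h : w.1 = w'.1
  · exact .inr ⟨w.2, w'.2, fun h' => hne (Prod.ext h h'), zu, zu'⟩
  · exact .inl ⟨w.1, w'.1, h, zw, zw'⟩

theorem hasTwoZeros_flip_of_minDegreeTwoOn (hr : RowSparse z) (hc : RowSparse (flip z))
    {K : Set (I × Λ)} (hK : (zeroCommGraph z).MinDegreeTwoOn K) {u : I × Λ} (hu : u ∈ K) :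
    HasTwoZeros (flip z) u.1 := by
  by_contra hu1
  obtain ⟨w, hwK, w', hw'K, hne, ⟨huw, zw, zu⟩, ⟨huw', zw', zu'⟩⟩ := hK u hu
  have h2 : w.2 = w'.2 := eq_of_not_hasTwoZeros hu1 zu zu'
  have h1 : w.1 ≠ w'.1 := fun h1 => hne (Prod.ext h1 h2)
  have hu2 : HasTwoZeros z u.2 := ⟨w.1, w'.1, h1, zw, zw'⟩
  -- Row `w.2` cannot be the row `u.2`: it would then contain the three zeros `u.1, w.1, w'.1`.
  have hw2 : ¬ HasTwoZeros z w.2 := by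
    intro hw2
    have he : w.2 = u.2 := hr.eq_of_hasTwoZeros hw2 hu2
    rcases hr.eq_or_eq_or_eq (he ▸ zu) zw zw' with h | h | h
    · exact huw (Prod.ext h he.symm)
    · exact huw' (Prod.ext h (he.symm.trans h2))
    · exact h1 h
  obtain ⟨v, -, v', -, hv, hwv, hwv'⟩ := hK w hwK
  obtain ⟨x, -, x', -, hx, hw'x, hw'x'⟩ := hK w' hw'K
  exact h1 (hc.eq_of_hasTwoZeros
    ((hasTwoZeros_or_of_adj_of_adj hwv hwv' hv).resolve_left hw2)
    ((hasTwoZeros_or_of_adj_of_adj hw'x hw'x' hx).resolve_left (h2 ▸ hw2)))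

theorem eq_of_mem_of_minDegreeTwoOn (hr : RowSparse z) (hc : RowSparse (flip z))
    {K : Set (I × Λ)} (hK : (zeroCommGraph z).MinDegreeTwoOn K) {u u' : I × Λ} (hu : u ∈ K)
    (hu' : u' ∈ K) : u = u' := by
  have hrow {v : I × Λ} (hv : v ∈ K) : HasTwoZeros z v.2 :=
    hasTwoZeros_flip_of_minDegreeTwoOn hc hr (minDegreeTwoOn_zeroCommGraph_flip hK) (u := v.swap)
      (by simpa using hv)
  exact Prod.ext
    (hc.eq_of_hasTwoZeros (hasTwoZeros_flip_of_minDegreeTwoOn hr hc hK hu)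
      (hasTwoZeros_flip_of_minDegreeTwoOn hr hc hK hu'))
    (hr.eq_of_hasTwoZeros (hrow hu) (hrow hu'))

theorem zeroCommGraph_isAcyclic (hr : RowSparse z) (hc : RowSparse (flip z)) :
    (zeroCommGraph z).IsAcyclic := by
  intro v c hcyc
  have hK := hcyc.minDegreeTwoOn_support
  obtain ⟨w, hw, w', hw', hne, -⟩ := hK v c.start_mem_support
  exact hne (eq_of_mem_of_minDegreeTwoOn hr hc hK hw hw')

end ZeroCommGraph

section ZeroPatternOfRees

variable {R : Type*} {P : Λ → I → Option R}

theorem eq_or_eq_or_eq_of_not_oSub_one_three (hO13 : ¬ OSub P 1 3) {l : Λ} {b₁ b₂ b₃ : I}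
    (h₁ : P l b₁ = none) (h₂ : P l b₂ = none) (h₃ : P l b₃ = none) :
    b₁ = b₂ ∨ b₁ = b₃ ∨ b₂ = b₃ := by
  classical
  by_contra! hne
  obtain ⟨h₁₂, h₁₃, h₂₃⟩ := hne
  refine hO13 ⟨{l}, {b₁, b₂, b₃}, Finset.card_singleton l,
    Finset.card_eq_three.mpr ⟨b₁, b₂, b₃, h₁₂, h₁₃, h₂₃, rfl⟩, ?_⟩
  simp only [Finset.mem_singleton, Finset.mem_insert]
  rintro _ rfl _ (rfl | rfl | rfl) <;> assumption

theorem rowSparse_of_not_sub (hO13 : ¬ OSub P 1 3) (hO22 : ¬ OSub P 2 2) (hA : ¬ ASub P)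
    (hB : ¬ BSub P) : RowSparse fun l i => P l i = none := by
  classical
  have ne_none {l : Λ} {x y w : I} (hxy : x ≠ y) (hxw : x ≠ w) (hyw : y ≠ w)
      (hx : P l x = none) (hy : P l y = none) : P l w ≠ none := fun hw => by
    rcases eq_or_eq_or_eq_of_not_oSub_one_three hO13 hx hy hw with h | h | h <;> contradiction
  have no22 {l l' : Λ} {x y : I} (hl : l ≠ l') (hxy : x ≠ y) (h₁ : P l x = none)
      (h₂ : P l y = none) (h₃ : P l' x = none) (h₄ : P l' y = none) : False := by
    refine hO22 ⟨{l, l'}, {x, y}, Finset.card_pair hl, Finset.card_pair hxy, ?_⟩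
    simp only [Finset.mem_singleton, Finset.mem_insert]
    rintro _ (rfl | rfl) _ (rfl | rfl) <;> assumption
  have noB {l l' : Λ} {x y w : I} (hl : l ≠ l') (hxy : x ≠ y) (hxw : x ≠ w) (hyw : y ≠ w)
      (h₁ : P l x = none) (h₂ : P l y = none) (h₃ : P l' y = none) (h₄ : P l' w = none) :
      False :=
    hB ⟨x, y, w, l, l', hxy, hxw, hyw, hl, h₁, h₂, h₃, h₄, ne_none hxy hxw hyw h₁ h₂,
      ne_none hyw.symm hxw.symm hxy.symm h₄ h₃⟩
  refine ⟨eq_or_eq_or_eq_of_not_oSub_one_three hO13, ?_⟩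
  rintro l l' ⟨b, b', hb, zb, zb'⟩ ⟨c, c', hc, zc, zc'⟩
  by_contra hl
  rcases eq_or_ne b c with rfl | hbc
  · rcases eq_or_ne b' c' with rfl | hb'c'
    · exact no22 hl hb zb zb' zc zc'
    · exact noB hl hb.symm hb'c' hc zb' zb zc zc'
  rcases eq_or_ne b c' with rfl | hbc'
  · rcases eq_or_ne b' c with rfl | hb'c
    · exact no22 hl hb zb zb' zc' zc
    · exact noB hl hb.symm hb'c hc.symm zb' zb zc' zc
  rcases eq_or_ne b' c with rfl | hb'c
  · exact noB hl hb hbc' hc zb zb' zc zc'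
  rcases eq_or_ne b' c' with rfl | hb'c'
  · exact noB hl hb hbc hc.symm zb zb' zc' zc
  refine hA ⟨b, b', c, c', l, l', hb, hbc, hbc', hb'c, hb'c', hc, hl, zb, zb', zc, zc', ?_⟩
  exact ⟨ne_none hb hbc hb'c zb zb', ne_none hb hbc' hb'c' zb zb',
    ne_none hc hbc.symm hbc'.symm zc zc', ne_none hc hb'c.symm hb'c'.symm zc zc'⟩

theorem oSub_flip_iff {m n : ℕ} : OSub (flip P) m n ↔ OSub P n m := by
  constructor <;>
    exact fun ⟨s, t, hs, ht, h⟩ => ⟨t, s, ht, hs, fun l hl i hi => h i hi l hl⟩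

end ZeroPatternOfRees

section ReesMatrix

variable {P : Λ → I → Option G}

-- For trivial `G`, distinct `(i, 1, λ)` and `(j, 1, μ)` commute only if both products are `0`:
-- two non-zero products `(i, 1, μ) = (j, 1, λ)` would force `i = j` and `λ = μ`.
def commGraphHom (htriv : ∀ x : G, x = 1) :
    commGraph P →g zeroCommGraph fun l i => P l i = none where
  toFun a := (a.1, a.2.2)
  map_rel' := by
    rintro ⟨i, x, l⟩ ⟨j, y, m⟩ ⟨hne, he⟩
    obtain rfl := htriv x
    obtain rfl := htriv y
    have hne' : (i, l) ≠ (j, m) := fun h => hne (by simp_all)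
    refine zeroCommGraph_adj.mpr ⟨hne', ?_⟩
    rcases hp : P l j with _ | p <;> rcases hq : P m i with _ | q <;>
      simp_all [reesMul]

theorem commGraphHom_injective (htriv : ∀ x : G, x = 1) :
    Function.Injective (commGraphHom (P := P) htriv) := by
  rintro ⟨i, x, l⟩ ⟨j, y, m⟩ h
  simp_all [commGraphHom]

end ReesMatrix

theorem stmt_15_general (P : Λ → I → Option G)
    (htriv : ∀ x : G, x = 1)
    (hO13 : ¬ OSub P 1 3) (hO31 : ¬ OSub P 3 1) (hO22 : ¬ OSub P 2 2)
    (hA : ¬ ASub P) (hAT : ¬ ATSub P) (hB : ¬ BSub P) (hBT : ¬ BTSub P) :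
    (commGraph P).IsAcyclic := by
  have hrow : RowSparse fun l i => P l i = none := rowSparse_of_not_sub hO13 hO22 hA hB
  have hcol : RowSparse fun i l => P l i = none :=
    rowSparse_of_not_sub (P := flip P) (oSub_flip_iff.not.mpr hO31) (oSub_flip_iff.not.mpr hO22)
      hAT hBT
  exact (zeroCommGraph_isAcyclic hrow hcol).comap _ (commGraphHom_injective htriv)

/-- If `G` is trivial and none of `D₃, O_{1×3}, O_{3×1}, O_{2×2}, A, Aᵀ, B, Bᵀ` is a
↔-submatrix of the zero-pattern of `P`, then `C(M⁰[G;I,Λ;P])` contains no cycles. -/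
theorem stmt_15 [Fintype I] [Fintype Λ] (P : Λ → I → Option G)
    (htriv : ∀ x : G, x = 1)
    (hrow : ∀ l : Λ, ∃ i : I, P l i ≠ none)
    (hcol : ∀ i : I, ∃ l : Λ, P l i ≠ none)
    (hzero : ∃ (i : I) (l : Λ), P l i = none)
    (hD3 : ¬ DSub P 3) (hO13 : ¬ OSub P 1 3) (hO31 : ¬ OSub P 3 1) (hO22 : ¬ OSub P 2 2)
    (hA : ¬ ASub P) (hAT : ¬ ATSub P) (hB : ¬ BSub P) (hBT : ¬ BTSub P) :
    (commGraph P).IsAcyclic :=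
  stmt_15_general P htriv hO13 hO31 hO22 hA hAT hB hBT
end

section
/- Let G be a trivial group, I and Λ finite index sets, and P a regular Λ×I matrix with entries in G⁰ containing at least one zero entry, and let A = [[0,0,×,×],[×,×,0,0]] and B = [[0,0,×],[×,0,0]]. Then C(M⁰[G;I,Λ;P]) contains a cycle if and only if at least one of D₃, O_{1×3}, O_{3×1}, O_{2×2}, A, Aᵀ, B, Bᵀ is a ↔-submatrix of the zero-pattern of P. Furthermore: (a) if at least one of D₃, O_{1×3}, O_{3×1}, O_{2×2} is a ↔-submatrix of the zero-pattern of P, then the girth of C(M⁰[G;I,Λ;P]) equals 3; (b) if at least one of A, Aᵀ, B, Bᵀ is a ↔-submatrix of the zero-pattern of P and none of D₃, O_{1×3}, O_{3×1}, O_{2×2} is, then the girth of C(M⁰[G;I,Λ;P]) equals 4. -/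
/-!
For trivial `G` an element `(i, 1, λ)` is determined by `(i, λ)`, and two distinct elements
`(i, λ)`, `(j, μ)` commute iff `p_{λj} = p_{μi} = 0`; so the commuting graph only depends on the
zero pattern `Z` of `P`. Each of the eight submatrices gives an explicit triangle (`D₃`, `O_{1×3}`,
`O_{3×1}`, `O_{2×2}`) or 4-cycle (`A`, `Aᵀ`, `B`, `Bᵀ`).

Conversely, without `O_{1×3}` and `O_{3×1}` every row and column of `Z` has at most two zeros,
and without `O_{2×2}`, `A`, `B` (resp. their transposes) at most one row (resp. column) has two.
A vertex `(i, λ)` of degree `≥ 2` then lies in that row or that column, and a short case analysis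
shows that no vertex has two distinct neighbours of degree `≥ 2`; as every vertex of a cycle has
two neighbours on it, the graph is acyclic. Likewise, without `O_{1×3}`, `O_{3×1}`, `O_{2×2}` the
vertices of a triangle lie in three distinct rows and columns with non-zero diagonal, i.e. form a
`D₃`; so under the hypotheses of (b) the girth is at least `4`.
-/

variable {G : Type*} [Group G] {I Λ : Type*}

namespace SimpleGraph

variable {V W : Type*} {H : SimpleGraph V} {H' : SimpleGraph W}

lemma Iso.neighborSet_nontrivial (f : H ≃g H') {v : V} (h : (H.neighborSet v).Nontrivial) :
    (H'.neighborSet (f v)).Nontrivial :=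
  (h.image f.injective).mono (f.toHom.image_neighborSet_subset v)

lemma Iso.exists_isCycle_length (f : H ≃g H') {n : ℕ}
    (h : ∃ (u : V) (w : H.Walk u u), w.IsCycle ∧ w.length = n) :
    ∃ (u : W) (w : H'.Walk u u), w.IsCycle ∧ w.length = n := by
  obtain ⟨u, w, hw, hl⟩ := h
  exact ⟨f u, w.map f.toHom, hw.map f.injective, by rw [Walk.length_map, hl]⟩

lemma Walk.IsCycle.neighborSet_nontrivial {v x : V} {c : H.Walk v v} (hc : c.IsCycle)
    (hx : x ∈ c.support) : (H.neighborSet x).Nontrivial := by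
  classical
  have hc' := hc.rotate hx
  exact ⟨_, (c.rotate x hx).adj_snd hc'.not_nil, _,
    ((c.rotate x hx).adj_penultimate hc'.not_nil).symm, hc'.snd_ne_penultimate⟩

/-- The second and the penultimate vertex of a cycle are distinct neighbours of its base point,
and both have two neighbours on the cycle. -/
theorem isAcyclic_of_subsingleton_branching_neighbors
    (h : ∀ v, {u ∈ H.neighborSet v | (H.neighborSet u).Nontrivial}.Subsingleton) :
    H.IsAcyclic := fun v c hc =>
  hc.snd_ne_penultimate <| h v
    ⟨c.adj_snd hc.not_nil, hc.neighborSet_nontrivial (c.getVert_mem_support _)⟩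
    ⟨(c.adj_penultimate hc.not_nil).symm, hc.neighborSet_nontrivial (c.getVert_mem_support _)⟩

lemma not_cliqueFree_three_of_adj {a b c : V} (hab : H.Adj a b) (hac : H.Adj a c)
    (hbc : H.Adj b c) : ¬ H.CliqueFree 3 := by
  classical
  exact fun h => h {a, b, c} (is3Clique_triple_iff.mpr ⟨hab, hac, hbc⟩)

lemma exists_isCycle_length_four {a b c d : V} (hab : H.Adj a b) (hbc : H.Adj b c)
    (hcd : H.Adj c d) (hda : H.Adj d a) (hac : a ≠ c) (hbd : b ≠ d) :
    ∃ (u : V) (w : H.Walk u u), w.IsCycle ∧ w.length = 4 := by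
  refine ⟨a, .cons hab (.cons hbc (.cons hcd (.cons hda .nil))), ?_, rfl⟩
  simp [Walk.isCycle_def, Sym2.eq, Sym2.rel_iff', hab.ne, hbc.ne, hcd.ne, hda.ne, hac, hbd,
    hab.ne.symm, hda.ne.symm, hac.symm]

lemma girth_eq_three_of_not_cliqueFree (h : ¬ H.CliqueFree 3) : H.girth = 3 := by
  obtain ⟨u, w, hw, hl⟩ :=
    is3Clique_iff_exists_cycle_length_three.mp (by simpa [CliqueFree] using h)
  exact le_antisymm (hl ▸ girth_le_length hw) (three_le_girth fun hH => hH w hw)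

lemma girth_eq_four_of_cliqueFree (hH : H.CliqueFree 3) {u : V} {w : H.Walk u u}
    (hw : w.IsCycle) (hl : w.length = 4) : H.girth = 4 := by
  refine le_antisymm (hl ▸ girth_le_length hw) ?_
  obtain ⟨v, c, hc, hg⟩ := exists_girth_eq_length.mpr fun hH' => hH' w hw
  have hc3 : c.length ≠ 3 := fun h3 => by
    obtain ⟨s, hs⟩ := is3Clique_iff_exists_cycle_length_three.mpr ⟨v, c, hc, h3⟩
    exact hH s hs
  have := hc.three_le_length
  omega

end SimpleGraph

lemma Set.two_lt_encard_of_mem {α : Type*} {s : Set α} {a b c : α} (ha : a ∈ s) (hb : b ∈ s)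
    (hc : c ∈ s) (hab : a ≠ b) (hac : a ≠ c) (hbc : b ≠ c) : 2 < s.encard :=
  calc (2 : ℕ∞) < 3 := by norm_num
    _ = ({a, b, c} : Set α).encard := (Set.encard_eq_three.mpr ⟨a, b, c, hab, hac, hbc, rfl⟩).symm
    _ ≤ s.encard := Set.encard_le_encard (by simp [Set.insert_subset_iff, ha, hb, hc])

section ZeroGraph

variable {X Y : Type*} (Z : X → Y → Prop)

open SimpleGraph

def zeroGraph : SimpleGraph (Y × X) where
  Adj u v := u ≠ v ∧ Z u.2 v.1 ∧ Z v.2 u.1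
  symm := ⟨fun _ _ h => ⟨h.1.symm, h.2.2, h.2.1⟩⟩
  loopless := ⟨fun _ h => h.1 rfl⟩

variable {Z}

@[simp]
lemma zeroGraph_adj {u v : Y × X} : (zeroGraph Z).Adj u v ↔ u ≠ v ∧ Z u.2 v.1 ∧ Z v.2 u.1 :=
  Iff.rfl

variable (Z) in
def zeroGraphSwapIso : zeroGraph Z ≃g zeroGraph (Function.swap Z) where
  toEquiv := Equiv.prodComm Y X
  map_rel_iff' := by simp [and_comm]

lemma row_nontrivial_or_col_nontrivial {i : Y} {l : X}
    (h : ((zeroGraph Z).neighborSet (i, l)).Nontrivial) :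
    {j | Z l j}.Nontrivial ∨ {m | Z m i}.Nontrivial := by
  obtain ⟨⟨j, m⟩, ⟨-, hj, hm⟩, ⟨j', m'⟩, ⟨-, hj', hm'⟩, hne⟩ := h
  by_cases hjj : j = j'
  · exact .inr ⟨m, hm, m', hm', fun hmm => hne (by rw [hjj, hmm])⟩
  · exact .inl ⟨j, hj, j', hj', hjj⟩

/-- If `Z c a`, a second neighbour of `(a, c)` in row `c` would give row `c` three zeros. -/
lemma col_nontrivial_of_neighborSet_nontrivial {a : Y} {c : X} (hrow : {j | Z c j}.encard ≤ 2)
    (h : ((zeroGraph Z).neighborSet (a, c)).Nontrivial) (hz : Z c a) :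
    {m | Z m a}.Nontrivial := by
  obtain ⟨⟨j, m⟩, ⟨hne, hj, hm⟩, ⟨j', m'⟩, ⟨hne', hj', hm'⟩, hjm⟩ := h
  by_cases hmc : m = c
  · by_cases hmc' : m' = c
    · subst hmc hmc'
      refine absurd hrow (not_le.mpr (Set.two_lt_encard_of_mem hz hj hj' ?_ ?_ ?_))
      · exact fun h => hne (Prod.ext h rfl)
      · exact fun h => hne' (Prod.ext h rfl)
      · exact fun h => hjm (Prod.ext h rfl)
    · exact ⟨m', hm', c, hz, hmc'⟩
  · exact ⟨m, hm, c, hz, hmc⟩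

lemma not_row_nontrivial_of_adj (hrow : ∀ l, {i | Z l i}.encard ≤ 2)
    (hrowU : {l | {i | Z l i}.Nontrivial}.Subsingleton)
    (hcolU : {i | {l | Z l i}.Nontrivial}.Subsingleton) {u v : Y × X}
    (huv : (zeroGraph Z).Adj u v) (hu : ((zeroGraph Z).neighborSet u).Nontrivial)
    (hv : ((zeroGraph Z).neighborSet v).Nontrivial) (hru : {i | Z u.2 i}.Nontrivial) :
    ¬ {i | Z v.2 i}.Nontrivial := by
  obtain ⟨i, l⟩ := u
  obtain ⟨a, c⟩ := v
  obtain ⟨hne, hla, hci⟩ := huv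
  intro hrv
  obtain rfl : c = l := hrowU hrv hru
  obtain rfl : a = i := hcolU (col_nontrivial_of_neighborSet_nontrivial (hrow c) hv hla)
    (col_nontrivial_of_neighborSet_nontrivial (hrow c) hu hci)
  exact hne rfl

lemma not_col_nontrivial_of_adj (hcol : ∀ i, {l | Z l i}.encard ≤ 2)
    (hrowU : {l | {i | Z l i}.Nontrivial}.Subsingleton)
    (hcolU : {i | {l | Z l i}.Nontrivial}.Subsingleton) {u v : Y × X}
    (huv : (zeroGraph Z).Adj u v) (hu : ((zeroGraph Z).neighborSet u).Nontrivial)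
    (hv : ((zeroGraph Z).neighborSet v).Nontrivial) (hcu : {l | Z l u.1}.Nontrivial) :
    ¬ {l | Z l v.1}.Nontrivial :=
  not_row_nontrivial_of_adj (Z := Function.swap Z) hcol hcolU hrowU
    ((zeroGraphSwapIso Z).map_adj_iff.mpr huv) ((zeroGraphSwapIso Z).neighborSet_nontrivial hu)
    ((zeroGraphSwapIso Z).neighborSet_nontrivial hv) hcu

/-- As the row of `v` has two zeros, its neighbours `(a, c)`, `(b, d)` of degree `≥ 2` have two
zeros in their columns, so `a = b`; then `c ≠ d` are two zeros in the column of `v`. -/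
lemma subsingleton_branching_neighbors_of_row_nontrivial (hrow : ∀ l, {i | Z l i}.encard ≤ 2)
    (hcol : ∀ i, {l | Z l i}.encard ≤ 2) (hrowU : {l | {i | Z l i}.Nontrivial}.Subsingleton)
    (hcolU : {i | {l | Z l i}.Nontrivial}.Subsingleton) {v : Y × X}
    (hv : {i | Z v.2 i}.Nontrivial) :
    {u ∈ (zeroGraph Z).neighborSet v | ((zeroGraph Z).neighborSet u).Nontrivial}.Subsingleton := by
  rintro ⟨a, c⟩ ⟨hvu, hu⟩ ⟨b, d⟩ ⟨hvw, hw⟩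
  by_contra hne
  have hvn : ((zeroGraph Z).neighborSet v).Nontrivial := ⟨_, hvu, _, hvw, hne⟩
  have hcolu : {m | Z m a}.Nontrivial := (row_nontrivial_or_col_nontrivial hu).resolve_left
    (not_row_nontrivial_of_adj hrow hrowU hcolU hvu hvn hu hv)
  have hcolw : {m | Z m b}.Nontrivial := (row_nontrivial_or_col_nontrivial hw).resolve_left
    (not_row_nontrivial_of_adj hrow hrowU hcolU hvw hvn hw hv)
  obtain rfl : a = b := hcolU hcolu hcolw
  have hcolv : {m | Z m v.1}.Nontrivial :=
    ⟨c, hvu.2.2, d, hvw.2.2, fun hcd => hne (by rw [hcd])⟩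
  exact not_col_nontrivial_of_adj hcol hrowU hcolU hvu hvn hu hcolv hcolu

lemma subsingleton_branching_neighbors (hrow : ∀ l, {i | Z l i}.encard ≤ 2)
    (hcol : ∀ i, {l | Z l i}.encard ≤ 2) (hrowU : {l | {i | Z l i}.Nontrivial}.Subsingleton)
    (hcolU : {i | {l | Z l i}.Nontrivial}.Subsingleton) (v : Y × X) :
    {u ∈ (zeroGraph Z).neighborSet v | ((zeroGraph Z).neighborSet u).Nontrivial}.Subsingleton := by
  intro u hu w hw
  by_contra hne
  let e := zeroGraphSwapIso Z
  rcases row_nontrivial_or_col_nontrivial (i := v.1) (l := v.2) ⟨u, hu.1, w, hw.1, hne⟩ with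
    hr | hc
  · exact hne (subsingleton_branching_neighbors_of_row_nontrivial hrow hcol hrowU hcolU hr hu hw)
  · refine hne (e.injective
      (subsingleton_branching_neighbors_of_row_nontrivial (Z := Function.swap Z) (v := e v)
        hcol hrow hcolU hrowU hc ?_ ?_))
    · exact ⟨e.map_adj_iff.mpr hu.1, e.neighborSet_nontrivial hu.2⟩
    · exact ⟨e.map_adj_iff.mpr hw.1, e.neighborSet_nontrivial hw.2⟩

theorem zeroGraph_isAcyclic (hrow : ∀ l, {i | Z l i}.encard ≤ 2)
    (hcol : ∀ i, {l | Z l i}.encard ≤ 2) (hrowU : {l | {i | Z l i}.Nontrivial}.Subsingleton)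
    (hcolU : {i | {l | Z l i}.Nontrivial}.Subsingleton) : (zeroGraph Z).IsAcyclic :=
  isAcyclic_of_subsingleton_branching_neighbors
    (subsingleton_branching_neighbors hrow hcol hrowU hcolU)

lemma fst_ne_of_triangle (hcol : ∀ i, {l | Z l i}.encard ≤ 2)
    (hsq : ∀ l l' i i', l ≠ l' → i ≠ i' → Z l i → Z l i' → Z l' i → Z l' i' → False)
    {u v w : Y × X} (huv : (zeroGraph Z).Adj u v) (huw : (zeroGraph Z).Adj u w)
    (hvw : (zeroGraph Z).Adj v w) : u.1 ≠ v.1 := by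
  obtain ⟨a, c⟩ := u
  obtain ⟨a', d⟩ := v
  obtain ⟨b, e⟩ := w
  rintro (rfl : a = a')
  obtain ⟨huv, hca, hda⟩ := huv
  obtain ⟨huw, hcb, hea⟩ := huw
  obtain ⟨hvw, hdb, -⟩ := hvw
  have hcd : c ≠ d := fun h => huv (Prod.ext rfl h)
  by_cases hba : b = a
  · subst hba
    refine absurd (hcol b) (not_le.mpr (Set.two_lt_encard_of_mem hca hda hea hcd ?_ ?_))
    · exact fun h => huw (Prod.ext rfl h)
    · exact fun h => hvw (Prod.ext rfl h)
  · exact hsq c d a b hcd (Ne.symm hba) hca hcb hda hdb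

lemma snd_ne_of_triangle (hrow : ∀ l, {i | Z l i}.encard ≤ 2)
    (hsq : ∀ l l' i i', l ≠ l' → i ≠ i' → Z l i → Z l i' → Z l' i → Z l' i' → False)
    {u v w : Y × X} (huv : (zeroGraph Z).Adj u v) (huw : (zeroGraph Z).Adj u w)
    (hvw : (zeroGraph Z).Adj v w) : u.2 ≠ v.2 :=
  let e := zeroGraphSwapIso Z
  fst_ne_of_triangle (Z := Function.swap Z) hrow
    (fun i i' l l' hi hl h₁ h₂ h₃ h₄ => hsq l l' i i' hl hi h₁ h₃ h₂ h₄)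
    (e.map_adj_iff.mpr huv) (e.map_adj_iff.mpr huw) (e.map_adj_iff.mpr hvw)

lemma not_zero_of_adj_of_adj (hrow : ∀ l, {i | Z l i}.encard ≤ 2) {u v w : Y × X}
    (huv : (zeroGraph Z).Adj u v) (huw : (zeroGraph Z).Adj u w) (h₁ : u.1 ≠ v.1)
    (h₂ : u.1 ≠ w.1) (h₃ : v.1 ≠ w.1) : ¬ Z u.2 u.1 := fun hz =>
  absurd (hrow u.2) (not_le.mpr (Set.two_lt_encard_of_mem hz huv.2.1 huw.2.1 h₁ h₂ h₃))

end ZeroGraph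

section Patterns

variable {α : Type*} (P : Λ → I → Option α)

lemma oSub_swap {n m : ℕ} : OSub (Function.swap P) n m ↔ OSub P m n :=
  ⟨fun ⟨S, L, hS, hL, h⟩ => ⟨L, S, hL, hS, fun l hl i hi => h i hi l hl⟩,
    fun ⟨L, S, hL, hS, h⟩ => ⟨S, L, hS, hL, fun i hi l hl => h l hl i hi⟩⟩

variable {P}

lemma oSub_two_two_of_zeros {l l' : Λ} {i i' : I} (hl : l ≠ l') (hi : i ≠ i')
    (h₁ : P l i = none) (h₂ : P l i' = none) (h₃ : P l' i = none) (h₄ : P l' i' = none) :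
    OSub P 2 2 := by
  classical
  refine ⟨{l, l'}, {i, i'}, Finset.card_pair hl, Finset.card_pair hi, ?_⟩
  simp only [Finset.mem_insert, Finset.mem_singleton]
  rintro _ (rfl | rfl) _ (rfl | rfl) <;> assumption

lemma encard_zeros_le_two (h : ¬ OSub P 1 3) (l : Λ) : {i | P l i = none}.encard ≤ 2 := by
  classical
  by_contra hlt
  obtain ⟨t, hts, ht⟩ := Set.exists_subset_encard_eq (Order.add_one_le_of_lt (not_le.mp hlt))
  obtain ⟨a, b, c, hab, hac, hbc, rfl⟩ := Set.encard_eq_three.mp ht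
  refine h ⟨{l}, {a, b, c}, Finset.card_singleton l,
    Finset.card_eq_three.mpr ⟨a, b, c, hab, hac, hbc, rfl⟩, ?_⟩
  simp only [Finset.mem_singleton, forall_eq]
  exact fun i hi => hts (by simpa using hi)

/-- Two rows with two zeros each: according to how many zero columns they share we find
`O_{2×2}`, `B` or `A` (the absence of `O_{1×3}` makes the remaining entries non-zero). -/
lemma subsingleton_nontrivial_zeros (h13 : ¬ OSub P 1 3) (h22 : ¬ OSub P 2 2)
    (hA : ¬ ASub P) (hB : ¬ BSub P) : {l | {i | P l i = none}.Nontrivial}.Subsingleton := by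
  rintro l ⟨i₁, z₁, i₂, z₂, h12⟩ l' hl'
  by_contra hl
  have hzl : ∀ j, P l j = none → j = i₁ ∨ j = i₂ := fun j hj => by
    by_contra! hne
    exact absurd (encard_zeros_le_two h13 l)
      (not_le.mpr (Set.two_lt_encard_of_mem z₁ z₂ hj h12 hne.1.symm hne.2.symm))
  by_cases y₁ : P l' i₁ = none <;> by_cases y₂ : P l' i₂ = none
  · exact h22 (oSub_two_two_of_zeros hl h12 z₁ z₂ y₁ y₂)
  · obtain ⟨k, hk, hk₁⟩ := hl'.exists_ne i₁
    have hk₂ : k ≠ i₂ := fun h => y₂ (h ▸ hk)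
    exact hB ⟨i₂, i₁, k, l, l', h12.symm, hk₂.symm, hk₁.symm, hl, z₂, z₁, y₁, hk,
      fun h => (hzl k h).elim hk₁ hk₂, y₂⟩
  · obtain ⟨k, hk, hk₂⟩ := hl'.exists_ne i₂
    have hk₁ : k ≠ i₁ := fun h => y₁ (h ▸ hk)
    exact hB ⟨i₁, i₂, k, l, l', h12, hk₁.symm, hk₂.symm, hl, z₁, z₂, y₂, hk,
      fun h => (hzl k h).elim hk₁ hk₂, y₁⟩
  · obtain ⟨i₃, y₃, i₄, y₄, h34⟩ := hl'
    have h13 : i₁ ≠ i₃ := fun h => y₁ (h ▸ y₃)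
    have h14 : i₁ ≠ i₄ := fun h => y₁ (h ▸ y₄)
    have h23 : i₂ ≠ i₃ := fun h => y₂ (h ▸ y₃)
    have h24 : i₂ ≠ i₄ := fun h => y₂ (h ▸ y₄)
    exact hA ⟨i₁, i₂, i₃, i₄, l, l', h12, h13, h14, h23, h24, h34, hl, z₁, z₂, y₃, y₄,
      fun h => (hzl i₃ h).elim h13.symm h23.symm, fun h => (hzl i₄ h).elim h14.symm h24.symm,
      y₁, y₂⟩

end Patterns

section ZeroPatternGraph

open SimpleGraph

variable {α : Type*} {P : Λ → I → Option α}

theorem zeroGraph_none_cliqueFree_three (h13 : ¬ OSub P 1 3) (h31 : ¬ OSub P 3 1)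
    (h22 : ¬ OSub P 2 2) (hD : ¬ DSub P 3) : (zeroGraph (P · · = none)).CliqueFree 3 := by
  classical
  intro s hs
  obtain ⟨u, v, w, huv, huw, hvw, -⟩ := is3Clique_iff.mp hs
  have hrow := encard_zeros_le_two h13
  have hcol := encard_zeros_le_two (P := Function.swap P) ((oSub_swap P).not.mpr h31)
  have hsq : ∀ l l' i i', l ≠ l' → i ≠ i' → P l i = none → P l i' = none → P l' i = none →
      P l' i' = none → False := fun _ _ _ _ hl hi h₁ h₂ h₃ h₄ =>
    h22 (oSub_two_two_of_zeros hl hi h₁ h₂ h₃ h₄)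
  have f₁ := fst_ne_of_triangle hcol hsq huv huw hvw
  have f₂ := fst_ne_of_triangle hcol hsq huw huv hvw.symm
  have f₃ := fst_ne_of_triangle hcol hsq hvw huv.symm huw.symm
  have s₁ := snd_ne_of_triangle hrow hsq huv huw hvw
  have s₂ := snd_ne_of_triangle hrow hsq huw huv hvw.symm
  have s₃ := snd_ne_of_triangle hrow hsq hvw huv.symm huw.symm
  refine hD ⟨![u.1, v.1, w.1], ![u.2, v.2, w.2], ?_, ?_, ?_, ?_⟩
  · intro p q; fin_cases p <;> fin_cases q <;> simp_all [eq_comm]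
  · intro p q; fin_cases p <;> fin_cases q <;> simp_all [eq_comm]
  · intro p; fin_cases p
    · exact not_zero_of_adj_of_adj hrow huv huw f₁ f₂ f₃
    · exact not_zero_of_adj_of_adj hrow huv.symm hvw (Ne.symm f₁) f₃ f₂
    · exact not_zero_of_adj_of_adj hrow huw.symm hvw.symm (Ne.symm f₂) (Ne.symm f₃) f₁
  · intro p q hpq
    fin_cases p <;> fin_cases q <;> simp_all [huv.2, huw.2, hvw.2]

theorem zeroGraph_none_isAcyclic (h13 : ¬ OSub P 1 3) (h31 : ¬ OSub P 3 1)
    (h22 : ¬ OSub P 2 2) (hA : ¬ ASub P) (hAT : ¬ ATSub P) (hB : ¬ BSub P) (hBT : ¬ BTSub P) :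
    (zeroGraph (P · · = none)).IsAcyclic := by
  have h13' : ¬ OSub (Function.swap P) 1 3 := (oSub_swap P).not.mpr h31
  exact zeroGraph_isAcyclic (encard_zeros_le_two h13) (encard_zeros_le_two h13')
    (subsingleton_nontrivial_zeros h13 h22 hA hB)
    (subsingleton_nontrivial_zeros h13' ((oSub_swap P).not.mpr h22) hAT hBT)

lemma not_cliqueFree_three_of_oSub_one_three (h : OSub P 1 3) :
    ¬ (zeroGraph (P · · = none)).CliqueFree 3 := by
  classical
  obtain ⟨L, S, hL, hS, hz⟩ := h
  obtain ⟨l, rfl⟩ := Finset.card_eq_one.mp hL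
  obtain ⟨i₁, i₂, i₃, h12, h13, h23, rfl⟩ := Finset.card_eq_three.mp hS
  have z : ∀ i ∈ ({i₁, i₂, i₃} : Finset I), P l i = none := hz l (Finset.mem_singleton_self l)
  exact not_cliqueFree_three_of_adj (a := (i₁, l)) (b := (i₂, l)) (c := (i₃, l))
    ⟨by simpa, z _ (by simp), z _ (by simp)⟩ ⟨by simpa, z _ (by simp), z _ (by simp)⟩
    ⟨by simpa, z _ (by simp), z _ (by simp)⟩

lemma not_cliqueFree_three_of_oSub_three_one (h : OSub P 3 1) :
    ¬ (zeroGraph (P · · = none)).CliqueFree 3 := fun hc =>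
  not_cliqueFree_three_of_oSub_one_three ((oSub_swap P).mpr h)
    (hc.comap (zeroGraphSwapIso (P · · = none)).symm.isContained)

lemma not_cliqueFree_three_of_oSub_two_two (h : OSub P 2 2) :
    ¬ (zeroGraph (P · · = none)).CliqueFree 3 := by
  classical
  obtain ⟨L, S, hL, hS, hz⟩ := h
  obtain ⟨l₁, l₂, hl, rfl⟩ := Finset.card_eq_two.mp hL
  obtain ⟨i₁, i₂, hi, rfl⟩ := Finset.card_eq_two.mp hS
  exact not_cliqueFree_three_of_adj (a := (i₁, l₁)) (b := (i₂, l₁)) (c := (i₁, l₂))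
    ⟨by simpa, hz _ (by simp) _ (by simp), hz _ (by simp) _ (by simp)⟩
    ⟨by simpa, hz _ (by simp) _ (by simp), hz _ (by simp) _ (by simp)⟩
    ⟨by simp [hl], hz _ (by simp) _ (by simp), hz _ (by simp) _ (by simp)⟩

lemma not_cliqueFree_three_of_dSub (h : DSub P 3) :
    ¬ (zeroGraph (P · · = none)).CliqueFree 3 := by
  obtain ⟨f, g, hf, -, -, hz⟩ := h
  have adj : ∀ p q : Fin 3, p ≠ q → (zeroGraph (P · · = none)).Adj (f p, g p) (f q, g q) :=
    fun p q hpq => ⟨fun h => hpq (hf (congrArg Prod.fst h)), hz p q hpq, hz q p hpq.symm⟩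
  exact not_cliqueFree_three_of_adj (adj 0 1 (by decide)) (adj 0 2 (by decide))
    (adj 1 2 (by decide))

lemma exists_isCycle_length_four_of_aSub (h : ASub P) :
    ∃ (u : I × Λ) (w : (zeroGraph (P · · = none)).Walk u u), w.IsCycle ∧ w.length = 4 := by
  obtain ⟨i₁, i₂, i₃, i₄, l₁, l₂, h12, h13, h14, h23, h24, h34, -, z₁, z₂, z₃, z₄, -⟩ := h
  exact exists_isCycle_length_four (a := (i₁, l₂)) (b := (i₃, l₁)) (c := (i₂, l₂))
    (d := (i₄, l₁)) ⟨by simp [h13], z₃, z₁⟩ ⟨by simp [h23.symm], z₂, z₃⟩ ⟨by simp [h24], z₄, z₂⟩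
    ⟨by simp [h14.symm], z₁, z₄⟩ (by simp [h12]) (by simp [h34])

lemma exists_isCycle_length_four_of_bSub (h : BSub P) :
    ∃ (u : I × Λ) (w : (zeroGraph (P · · = none)).Walk u u), w.IsCycle ∧ w.length = 4 := by
  obtain ⟨i₁, i₂, i₃, l₁, l₂, h12, h13, h23, hl, z₁, z₂, z₃, z₄, -⟩ := h
  exact exists_isCycle_length_four (a := (i₂, l₁)) (b := (i₂, l₂)) (c := (i₃, l₁))
    (d := (i₁, l₂)) ⟨by simp [hl], z₂, z₃⟩ ⟨by simp [h23], z₄, z₂⟩ ⟨by simp [h13.symm], z₁, z₄⟩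
    ⟨by simp [h12], z₃, z₁⟩ (by simp [h23]) (by simp [h12.symm])

lemma exists_isCycle_length_four_of_aTSub (h : ATSub P) :
    ∃ (u : I × Λ) (w : (zeroGraph (P · · = none)).Walk u u), w.IsCycle ∧ w.length = 4 :=
  (zeroGraphSwapIso (P · · = none)).symm.exists_isCycle_length
    (exists_isCycle_length_four_of_aSub (P := Function.swap P) h)

lemma exists_isCycle_length_four_of_bTSub (h : BTSub P) :
    ∃ (u : I × Λ) (w : (zeroGraph (P · · = none)).Walk u u), w.IsCycle ∧ w.length = 4 :=
  (zeroGraphSwapIso (P · · = none)).symm.exists_isCycle_length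
    (exists_isCycle_length_four_of_bSub (P := Function.swap P) h)

end ZeroPatternGraph

/-- For trivial `G` the element `(i, g, λ)` is determined by `(i, λ)`, and two distinct elements
commute iff both products vanish: non-zero products `(i, _, μ)`, `(j, _, λ)` agree only if
`(i, λ) = (j, μ)`. -/
def commGraphIsoZeroGraph [Subsingleton G] (P : Λ → I → Option G) :
    commGraph P ≃g zeroGraph (P · · = none) where
  toFun u := (u.1, u.2.2)
  invFun u := (u.1, 1, u.2)
  left_inv u := Prod.ext rfl (Prod.ext (Subsingleton.elim _ _) rfl)
  right_inv _ := rfl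
  map_rel_iff' := by
    rintro ⟨i, x, l⟩ ⟨j, y, m⟩
    obtain rfl := Subsingleton.elim x y
    simp only [Equiv.coe_fn_mk, zeroGraph_adj, commGraph, reesMul, ne_eq, Prod.mk.injEq,
      true_and]
    cases P l j <;> cases P m i <;> simp
    exact fun hne hij _ hml => hne hij hml.symm

theorem stmt_17_general (P : Λ → I → Option G)
    (htriv : ∀ x : G, x = 1) :
    (¬ (commGraph P).IsAcyclic ↔
      (DSub P 3 ∨ OSub P 1 3 ∨ OSub P 3 1 ∨ OSub P 2 2 ∨
        ASub P ∨ ATSub P ∨ BSub P ∨ BTSub P)) ∧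
    ((DSub P 3 ∨ OSub P 1 3 ∨ OSub P 3 1 ∨ OSub P 2 2) →
      (commGraph P).girth = 3) ∧
    ((ASub P ∨ ATSub P ∨ BSub P ∨ BTSub P) →
      ¬ DSub P 3 → ¬ OSub P 1 3 → ¬ OSub P 3 1 → ¬ OSub P 2 2 →
      (commGraph P).girth = 4) := by
  have : Subsingleton G := ⟨fun x y => (htriv x).trans (htriv y).symm⟩
  rw [(commGraphIsoZeroGraph P).isAcyclic_iff, (commGraphIsoZeroGraph P).girth_eq]
  have triangle : (DSub P 3 ∨ OSub P 1 3 ∨ OSub P 3 1 ∨ OSub P 2 2) →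
      ¬ (zeroGraph (P · · = none)).CliqueFree 3 := by
    rintro (h | h | h | h)
    exacts [not_cliqueFree_three_of_dSub h, not_cliqueFree_three_of_oSub_one_three h,
      not_cliqueFree_three_of_oSub_three_one h, not_cliqueFree_three_of_oSub_two_two h]
  have square : (ASub P ∨ ATSub P ∨ BSub P ∨ BTSub P) →
      ∃ (u : I × Λ) (w : (zeroGraph (P · · = none)).Walk u u), w.IsCycle ∧ w.length = 4 := by
    rintro (h | h | h | h)
    exacts [exists_isCycle_length_four_of_aSub h, exists_isCycle_length_four_of_aTSub h,
      exists_isCycle_length_four_of_bSub h, exists_isCycle_length_four_of_bTSub h]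
  refine ⟨⟨fun hcyc => ?_, fun h hac => ?_⟩,
    fun h => SimpleGraph.girth_eq_three_of_not_cliqueFree (triangle h), fun h hD h13 h31 h22 => ?_⟩
  · by_contra! ⟨-, h13, h31, h22, hA, hAT, hB, hBT⟩
    exact hcyc (zeroGraph_none_isAcyclic h13 h31 h22 hA hAT hB hBT)
  · obtain h | h : (DSub P 3 ∨ OSub P 1 3 ∨ OSub P 3 1 ∨ OSub P 2 2) ∨
        (ASub P ∨ ATSub P ∨ BSub P ∨ BTSub P) := by tauto
    · exact triangle h (hac.cliqueFree le_rfl)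
    · obtain ⟨u, w, hw, -⟩ := square h
      exact hac w hw
  · obtain ⟨u, w, hw, hl⟩ := square h
    exact SimpleGraph.girth_eq_four_of_cliqueFree
      (zeroGraph_none_cliqueFree_three h13 h31 h22 hD) hw hl

/-- For trivial `G`: `C(M⁰[G;I,Λ;P])` contains a cycle iff at least one of
`D₃, O_{1×3}, O_{3×1}, O_{2×2}, A, Aᵀ, B, Bᵀ` is a ↔-submatrix of the zero-pattern of `P`.
Moreover (a) if one of `D₃, O_{1×3}, O_{3×1}, O_{2×2}` is such a submatrix, the girth is `3`;
(b) if one of `A, Aᵀ, B, Bᵀ` is and none of `D₃, O_{1×3}, O_{3×1}, O_{2×2}` is, the girth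
is `4`. -/
theorem stmt_17 [Fintype I] [Fintype Λ] (P : Λ → I → Option G)
    (htriv : ∀ x : G, x = 1)
    (hrow : ∀ l : Λ, ∃ i : I, P l i ≠ none)
    (hcol : ∀ i : I, ∃ l : Λ, P l i ≠ none)
    (hzero : ∃ (i : I) (l : Λ), P l i = none) :
    (¬ (commGraph P).IsAcyclic ↔
      (DSub P 3 ∨ OSub P 1 3 ∨ OSub P 3 1 ∨ OSub P 2 2 ∨
        ASub P ∨ ATSub P ∨ BSub P ∨ BTSub P)) ∧
    ((DSub P 3 ∨ OSub P 1 3 ∨ OSub P 3 1 ∨ OSub P 2 2) →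
      (commGraph P).girth = 3) ∧
    ((ASub P ∨ ATSub P ∨ BSub P ∨ BTSub P) →
      ¬ DSub P 3 → ¬ OSub P 1 3 → ¬ OSub P 3 1 → ¬ OSub P 2 2 →
      (commGraph P).girth = 4) :=
  stmt_17_general P htriv
end

section
/- Let G be a finite group, I and Λ finite index sets, and P a regular Λ×I matrix with entries in G⁰ containing at least one zero entry. If the commuting graph C(M⁰[G;I,Λ;P]) is connected and z is the number of zero entries of P, then the chromatic number of C(M⁰[G;I,Λ;P]) is at most z·|G|. -/
variable {G : Type*} [Group G] {I Λ : Type*}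

/-!
Colour the vertex `(i, x, l)` by the pair `(e, x)`, where `e` is a zero entry of `P` in row `l`,
chosen to be `(l, i)` itself whenever `p_{li} = 0`. Two commuting vertices `(i, x, l)`, `(j, y, m)`
either have both products non-zero, which forces `i = j` and `l = m`, or both zero, so that
`p_{lj} = p_{mi} = 0`. In the second case equal colours give `l = m` (both rows contain a zero),
and then the chosen zero entries are `(l, i)` and `(l, j)`, so `i = j`. In both cases equal colours
force `x = y`, hence equal vertices.
-/

open SimpleGraph

section

variable {α : Type*} (P : Λ → I → Option α)

abbrev zeroEntries : Type _ := {q : Λ × I // P q.1 q.2 = none}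

open Classical in
noncomputable def rowZero (z₀ : zeroEntries P) (q : Λ × I) : zeroEntries P :=
  if h : P q.1 q.2 = none then ⟨q, h⟩
  else if h' : ∃ j, P q.1 j = none then ⟨(q.1, h'.choose), h'.choose_spec⟩
  else z₀

variable {P}

lemma rowZero_of_eq_none (z₀ : zeroEntries P) {q : Λ × I} (h : P q.1 q.2 = none) :
    rowZero P z₀ q = ⟨q, h⟩ :=
  dif_pos h

lemma rowZero_row (z₀ : zeroEntries P) {q : Λ × I} (h : ∃ j, P q.1 j = none) :
    (rowZero P z₀ q).1.1 = q.1 := by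
  unfold rowZero
  split_ifs <;> rfl

end

lemma commGraph_adj_cases {P : Λ → I → Option G} {i j : I} {x y : G} {l m : Λ}
    (h : (commGraph P).Adj (i, x, l) (j, y, m)) :
    (i = j ∧ l = m) ∨ (P l j = none ∧ P m i = none) := by
  obtain ⟨-, hcomm⟩ := h
  simp only [reesMul] at hcomm
  rcases hlj : P l j with _ | p <;> rcases hmi : P m i with _ | q <;> simp_all

noncomputable def zeroColoring {P : Λ → I → Option G} (z₀ : zeroEntries P) :
    (commGraph P).Coloring (zeroEntries P × G) :=
  Coloring.mk (fun v => (rowZero P z₀ (v.2.2, v.1), v.2.1)) <| by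
    rintro ⟨i, x, l⟩ ⟨j, y, m⟩ hadj hcolour
    obtain ⟨hrow, hxy⟩ := Prod.mk.inj hcolour
    dsimp only at hrow hxy
    subst hxy
    apply hadj.ne
    rcases commGraph_adj_cases hadj with ⟨rfl, rfl⟩ | ⟨hlj, hmi⟩
    · rfl
    obtain rfl : l = m := calc
      l = (rowZero P z₀ (l, i)).1.1 := (rowZero_row z₀ (q := (l, i)) ⟨j, hlj⟩).symm
      _ = (rowZero P z₀ (m, j)).1.1 := by rw [hrow]
      _ = m := rowZero_row z₀ (q := (m, j)) ⟨i, hmi⟩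
    rw [rowZero_of_eq_none z₀ (q := (l, i)) hmi, rowZero_of_eq_none z₀ (q := (l, j)) hlj] at hrow
    obtain rfl : i = j := congrArg (fun e : zeroEntries P => e.1.2) hrow
    rfl

theorem stmt_18_general [Fintype G] [Fintype I] [Fintype Λ] (P : Λ → I → Option G)
    (hzero : ∃ (i : I) (l : Λ), P l i = none) :
    (commGraph P).chromaticNumber ≤
      ((Nat.card {q : Λ × I // P q.1 q.2 = none} * Fintype.card G : ℕ) : ℕ∞) := by
  classical
  obtain ⟨i, l, h⟩ := hzero
  calc (commGraph P).chromaticNumber ≤ Fintype.card (zeroEntries P × G) :=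
        (zeroColoring ⟨(l, i), h⟩).colorable.chromaticNumber_le
    _ = _ := by rw [Fintype.card_prod, Nat.card_eq_fintype_card]

/-- If `C(M⁰[G;I,Λ;P])` is connected and `z` is the number of zero entries of `P`, then
the chromatic number of `C(M⁰[G;I,Λ;P])` is at most `z·|G|`. -/
theorem stmt_18 [Fintype G] [Fintype I] [Fintype Λ] (P : Λ → I → Option G)
    (hrow : ∀ l : Λ, ∃ i : I, P l i ≠ none)
    (hcol : ∀ i : I, ∃ l : Λ, P l i ≠ none)
    (hzero : ∃ (i : I) (l : Λ), P l i = none)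
    (hconn : (commGraph P).Connected) :
    (commGraph P).chromaticNumber ≤
      ((Nat.card {q : Λ × I // P q.1 q.2 = none} * Fintype.card G : ℕ) : ℕ∞) :=
  stmt_18_general P hzero
end

section
/- Let G be a finite group, I and Λ finite index sets, and P a regular Λ×I matrix with entries in G⁰ containing at least one zero entry. Then the commuting graph C(M⁰[G;I,Λ;P]) contains a left path if and only if at least one of the following holds: (1) |G| > 1; (2) O_{1×2} is a ↔-submatrix of the zero-pattern of P; (3) O_{2×1} is a ↔-submatrix of the zero-pattern of P. Furthermore, if C(M⁰[G;I,Λ;P]) contains a left path, then the knit degree of M⁰[G;I,Λ;P] equals 1. -/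
variable {G : Type*} [Group G] {I Λ : Type*}

/-- A walk `w` from `u` to `v` in `C(M⁰[G;I,Λ;P])` is a left path if it is a path, `u ≠ v`,
and `u·x = v·x` in `M⁰[G;I,Λ;P]` for every vertex `x` of the walk. -/
def IsLeftPath (P : Λ → I → Option G) {u v : I × G × Λ} (w : (commGraph P).Walk u v) :
    Prop :=
  w.IsPath ∧ u ≠ v ∧
    ∀ x ∈ w.support, reesMul P (some u) (some x) = reesMul P (some v) (some x)

/-!
If two distinct vertices `u = (i, x, λ)` and `v = (j, y, μ)` are such that `P` vanishes on
`{λ, μ} × {i, j}`, then all four products of `u` and `v` are `0`, so the single edge `u – v` is a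
left path. Each of the three conditions yields such a pair: two group elements over one zero
entry, two zeros in a row, or two zeros in a column. Hence the knit degree is `1` whenever left
paths exist.

Conversely, let `G` be trivial, so that a nonzero product `(i, λ)(k, ν)` equals `(i, ν)`, and let
`u = (i, λ) ≠ v = (j, μ)` be the ends of a left path. If `i ≠ j`, then `u·x = v·x` only holds when
both sides vanish; for `x = u` and `x = v` this gives `p_{λi} = p_{λj} = 0`. If `i = j`, then
`λ ≠ μ`, and the next vertex `b = (k, ν) ≠ u` of the path commutes with `u`, which forces `u·b = 0`
and hence `v·b = u·b = 0`, i.e. `p_{λk} = p_{μk} = 0`.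
-/

lemma reesMul_some (P : Λ → I → Option G) (i j : I) (x y : G) (l m : Λ) :
    reesMul P (some (i, x, l)) (some (j, y, m)) = (P l j).map fun p => (i, x * p * y, m) :=
  rfl

lemma reesMul_eq_none_iff (P : Λ → I → Option G) (u v : I × G × Λ) :
    reesMul P (some u) (some v) = none ↔ P u.2.2 v.1 = none := by
  obtain ⟨i, x, l⟩ := u
  obtain ⟨j, y, m⟩ := v
  exact Option.map_eq_none_iff

lemma oSub_one_two_iff (P : Λ → I → Option G) :
    OSub P 1 2 ↔ ∃ (l : Λ) (i j : I), i ≠ j ∧ P l i = none ∧ P l j = none := by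
  classical
  constructor
  · rintro ⟨Λ', I', hΛ, hI, hP⟩
    obtain ⟨l, rfl⟩ := Finset.card_eq_one.mp hΛ
    obtain ⟨i, j, hij, rfl⟩ := Finset.card_eq_two.mp hI
    exact ⟨l, i, j, hij, hP l (by simp) i (by simp), hP l (by simp) j (by simp)⟩
  · rintro ⟨l, i, j, hij, hi, hj⟩
    refine ⟨{l}, {i, j}, Finset.card_singleton l, Finset.card_pair hij, ?_⟩
    simp only [Finset.mem_singleton, Finset.mem_insert]
    rintro _ rfl _ (rfl | rfl) <;> assumption

lemma oSub_two_one_iff (P : Λ → I → Option G) :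
    OSub P 2 1 ↔ ∃ (l m : Λ) (i : I), l ≠ m ∧ P l i = none ∧ P m i = none := by
  classical
  constructor
  · rintro ⟨Λ', I', hΛ, hI, hP⟩
    obtain ⟨l, m, hlm, rfl⟩ := Finset.card_eq_two.mp hΛ
    obtain ⟨i, rfl⟩ := Finset.card_eq_one.mp hI
    exact ⟨l, m, i, hlm, hP l (by simp) i (by simp), hP m (by simp) i (by simp)⟩
  · rintro ⟨l, m, i, hlm, hl, hm⟩
    refine ⟨{l, m}, {i}, Finset.card_pair hlm, Finset.card_singleton i, ?_⟩
    simp only [Finset.mem_singleton, Finset.mem_insert]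
    rintro _ (rfl | rfl) _ rfl <;> assumption

lemma IsLeftPath.length_pos {P : Λ → I → Option G} {u v : I × G × Λ}
    {w : (commGraph P).Walk u v} (hw : IsLeftPath P w) : 0 < w.length :=
  Nat.pos_of_ne_zero fun h => hw.2.1 (w.eq_of_length_eq_zero h)

lemma isLeftPath_toWalk_of_eq_none (P : Λ → I → Option G) {i j : I} {x y : G} {l m : Λ}
    (huv : (i, x, l) ≠ (j, y, m)) (hli : P l i = none) (hlj : P l j = none)
    (hmi : P m i = none) (hmj : P m j = none) :
    ∃ hadj : (commGraph P).Adj (i, x, l) (j, y, m), IsLeftPath P hadj.toWalk := by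
  have hadj : (commGraph P).Adj (i, x, l) (j, y, m) := ⟨huv, by simp [reesMul_some, hlj, hmi]⟩
  refine ⟨hadj, by simp [huv], huv, ?_⟩
  simp [reesMul_some, hli, hlj, hmi, hmj]

lemma exists_isLeftPath_length_one [Fintype G] (P : Λ → I → Option G)
    (hzero : ∃ (i : I) (l : Λ), P l i = none)
    (h : 1 < Fintype.card G ∨ OSub P 1 2 ∨ OSub P 2 1) :
    ∃ (u v : I × G × Λ) (w : (commGraph P).Walk u v), IsLeftPath P w ∧ w.length = 1 := by
  suffices ∃ (i j : I) (x y : G) (l m : Λ), (i, x, l) ≠ (j, y, m) ∧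
      P l i = none ∧ P l j = none ∧ P m i = none ∧ P m j = none by
    obtain ⟨i, j, x, y, l, m, huv, hli, hlj, hmi, hmj⟩ := this
    obtain ⟨hadj, hw⟩ := isLeftPath_toWalk_of_eq_none P huv hli hlj hmi hmj
    exact ⟨_, _, hadj.toWalk, hw, rfl⟩
  rcases h with hG | hO | hO
  · obtain ⟨i, l, hil⟩ := hzero
    obtain ⟨x, y, hxy⟩ := Fintype.one_lt_card_iff.mp hG
    exact ⟨i, i, x, y, l, l, by simp [hxy], hil, hil, hil, hil⟩
  · obtain ⟨l, i, j, hij, hi, hj⟩ := (oSub_one_two_iff P).mp hO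
    exact ⟨i, j, 1, 1, l, l, by simp [hij], hi, hj, hi, hj⟩
  · obtain ⟨l, m, i, hlm, hl, hm⟩ := (oSub_two_one_iff P).mp hO
    exact ⟨i, i, 1, 1, l, m, by simp [hlm], hl, hl, hm, hm⟩

lemma reesMul_eq_none_of_fst_ne {P : Λ → I → Option G} {u v b : I × G × Λ}
    (h : reesMul P (some u) (some b) = reesMul P (some v) (some b)) (hne : u.1 ≠ v.1) :
    reesMul P (some u) (some b) = none := by
  obtain ⟨i, x, l⟩ := u
  obtain ⟨j, y, m⟩ := v
  obtain ⟨k, z, n⟩ := b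
  cases hl : P l k <;> cases hm : P m k <;> simp_all [reesMul_some]

lemma reesMul_eq_none_of_adj [Subsingleton G] {P : Λ → I → Option G} {u b : I × G × Λ}
    (h : (commGraph P).Adj u b) : reesMul P (some u) (some b) = none := by
  obtain ⟨i, x, l⟩ := u
  obtain ⟨k, z, n⟩ := b
  obtain ⟨hne, hcomm⟩ := h
  cases hlk : P l k <;> cases hni : P n i <;> simp_all [reesMul_some, Subsingleton.elim x z]

lemma oSub_of_isLeftPath [Subsingleton G] {P : Λ → I → Option G} {u v : I × G × Λ}
    {w : (commGraph P).Walk u v} (hw : IsLeftPath P w) : OSub P 1 2 ∨ OSub P 2 1 := by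
  obtain ⟨-, huv, hmul⟩ := hw
  by_cases hij : u.1 = v.1
  · cases w with
    | nil => exact absurd rfl huv
    | cons hadj w' =>
      have hub := reesMul_eq_none_of_adj hadj
      have hvb := (hmul _ (by simp)).symm.trans hub
      have hlm : u.2.2 ≠ v.2.2 := fun hlm => huv (by
        ext <;> simp [hij, hlm, Subsingleton.elim u.2.1 v.2.1])
      rw [reesMul_eq_none_iff] at hub hvb
      exact Or.inr ((oSub_two_one_iff P).mpr ⟨_, _, _, hlm, hub, hvb⟩)
  · have huu := reesMul_eq_none_of_fst_ne (hmul _ w.start_mem_support) hij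
    have huv' := reesMul_eq_none_of_fst_ne (hmul _ w.end_mem_support) hij
    rw [reesMul_eq_none_iff] at huu huv'
    exact Or.inl ((oSub_one_two_iff P).mpr ⟨_, _, _, hij, huu, huv'⟩)

lemma condition_of_isLeftPath [Fintype G] {P : Λ → I → Option G} {u v : I × G × Λ}
    {w : (commGraph P).Walk u v} (hw : IsLeftPath P w) :
    1 < Fintype.card G ∨ OSub P 1 2 ∨ OSub P 2 1 := by
  rcases lt_or_ge 1 (Fintype.card G) with hG | hG
  · exact Or.inl hG
  · have := Fintype.card_le_one_iff_subsingleton.mp hG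
    exact Or.inr (oSub_of_isLeftPath hw)

theorem stmt_19_general [Fintype G] (P : Λ → I → Option G)
    (hzero : ∃ (i : I) (l : Λ), P l i = none) :
    ((∃ (u v : I × G × Λ) (w : (commGraph P).Walk u v), IsLeftPath P w) ↔
      (1 < Fintype.card G ∨ OSub P 1 2 ∨ OSub P 2 1)) ∧
    ((∃ (u v : I × G × Λ) (w : (commGraph P).Walk u v), IsLeftPath P w) →
      sInf {n : ℕ | ∃ (u v : I × G × Λ) (w : (commGraph P).Walk u v),
        IsLeftPath P w ∧ w.length = n} = 1) := by
  have hiff : (∃ (u v : I × G × Λ) (w : (commGraph P).Walk u v), IsLeftPath P w) ↔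
      (1 < Fintype.card G ∨ OSub P 1 2 ∨ OSub P 2 1) :=
    ⟨fun ⟨_, _, _, hw⟩ => condition_of_isLeftPath hw, fun h =>
      let ⟨u, v, w, hw, _⟩ := exists_isLeftPath_length_one P hzero h
      ⟨u, v, w, hw⟩⟩
  refine ⟨hiff, fun hex => ?_⟩
  obtain ⟨u, v, w, hw, hlen⟩ := exists_isLeftPath_length_one P hzero (hiff.mp hex)
  refine le_antisymm (Nat.sInf_le ⟨u, v, w, hw, hlen⟩) (le_csInf ⟨1, u, v, w, hw, hlen⟩ ?_)
  rintro n ⟨_, _, w', hw', rfl⟩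
  exact hw'.length_pos

/-- `C(M⁰[G;I,Λ;P])` contains a left path iff `|G| > 1`, or `O_{1×2}`, or `O_{2×1}` is a
↔-submatrix of the zero-pattern of `P`; and in that case, the knit degree of
`M⁰[G;I,Λ;P]` (the length of a shortest left path) equals `1`. -/
theorem stmt_19 [Fintype G] [Fintype I] [Fintype Λ] (P : Λ → I → Option G)
    (hrow : ∀ l : Λ, ∃ i : I, P l i ≠ none)
    (hcol : ∀ i : I, ∃ l : Λ, P l i ≠ none)
    (hzero : ∃ (i : I) (l : Λ), P l i = none) :
    ((∃ (u v : I × G × Λ) (w : (commGraph P).Walk u v), IsLeftPath P w) ↔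
      (1 < Fintype.card G ∨ OSub P 1 2 ∨ OSub P 2 1)) ∧
    ((∃ (u v : I × G × Λ) (w : (commGraph P).Walk u v), IsLeftPath P w) →
      sInf {n : ℕ | ∃ (u v : I × G × Λ) (w : (commGraph P).Walk u v),
        IsLeftPath P w ∧ w.length = n} = 1) :=
  stmt_19_general P hzero
end
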